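/- arXiv:1303.4630 — 6 statements merged into one kernel-verified Lean document; each statement's English description precedes it below -/
import Mathlib

section
/- Let k be a field, F = k((ε)) the field of formal Laurent series, O = k[[ε]], and val the ε-adic valuation. Let γ_1, …, γ_d ∈ O be pairwise distinct, and let Λ ⊆ F^d be the O-submodule generated by the d vectors v_s = (γ_1^s, γ_2^s, …, γ_d^s) for s = 0, 1, …, d−1. Then for every permutation σ of {1,…,d} and every index i ∈ {1,…,d}, the set { a ∈ F : there exists x ∈ Λ with x_{σ(j)} = 0 for all 1 ≤ j ≤ i−1 and x_{σ(i)} = a } equals the fractional ideal ε^{m_i}·O, where m_i = ∑_{j=1}^{i−1} val(γ_{σ(i)} − γ_{σ(j)}). -/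
/-!
The lattice `Λ` consists of the vectors `(P(γ l))_l` with `P ∈ O[X]` of degree `< d`. If `P`
vanishes at the distinct points `γ (σ j)`, `j < i`, it is a multiple of the nodal polynomial
`∏_{j<i} (X - γ (σ j))`, which itself has degree `i < d`; hence the attainable values of
`P(γ (σ i))` are exactly the multiples of `D = ∏_{j<i} (γ (σ i) - γ (σ j))`. In `O`, `D` is
`ε ^ val D` times a unit, and `val D` is the sum of the valuations of its factors.
-/

open Polynomial

namespace Lagrange

theorem nodal_dvd_of_eval_eq_zero {R ι : Type*} [CommRing R] [IsDomain R] {s : Finset ι}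
    {v : ι → R} (hvs : Set.InjOn v s) {P : R[X]} (hP : ∀ i ∈ s, P.eval (v i) = 0) :
    nodal s v ∣ P := by
  rw [← modByMonic_eq_zero_iff_dvd nodal_monic]
  refine eq_zero_of_degree_lt_of_eval_index_eq_zero s hvs ?_ fun i hi => ?_
  · simpa only [degree_nodal] using degree_modByMonic_lt P (nodal_monic (s := s) (v := v))
  · rw [modByMonic_eq_sub_mul_div, eval_sub, eval_mul, eval_nodal_at_node hi, hP i hi,
      zero_mul, sub_zero]

end Lagrange

theorem exists_mem_degreeLT_eval_eq_iff_prod_dvd {R ι : Type*} [CommRing R] [IsDomain R]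
    {v : ι → R} {s : Finset ι} (hvs : Set.InjOn v s) {d : ℕ} (hsd : s.card < d) (i : ι) (a : R) :
    (∃ P ∈ degreeLT R d, (∀ j ∈ s, P.eval (v j) = 0) ∧ P.eval (v i) = a) ↔
      (∏ j ∈ s, (v i - v j)) ∣ a := by
  rw [← Lagrange.eval_nodal]
  constructor
  · rintro ⟨P, -, hvanish, rfl⟩
    obtain ⟨Q, rfl⟩ := Lagrange.nodal_dvd_of_eval_eq_zero hvs hvanish
    exact ⟨Q.eval (v i), eval_mul⟩
  · rintro ⟨b, rfl⟩
    refine ⟨b • Lagrange.nodal s v, ?_, fun j hj => ?_, ?_⟩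
    · rw [mem_degreeLT]
      refine (degree_smul_le _ _).trans_lt ?_
      rw [Lagrange.degree_nodal]
      exact_mod_cast hsd
    · rw [eval_smul, Lagrange.eval_nodal_at_node hj, smul_zero]
    · rw [eval_smul, smul_eq_mul, mul_comm]

section VandermondeSpan

variable {R A ι : Type*} [CommSemiring R] [Semiring A] [Algebra R A]

theorem span_range_pow_eq_map_degreeLT (a : ι → A) (d : ℕ) :
    Submodule.span R (Set.range fun s : Fin d => fun l => a l ^ (s : ℕ)) =
      (degreeLT R d).map (LinearMap.pi fun l => (aeval (a l)).toLinearMap) := by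
  classical
  have hX_pow (n : ℕ) :
      (LinearMap.pi fun l => (aeval (a l)).toLinearMap) (X ^ n : R[X]) = fun l => a l ^ n := by
    ext l
    simp
  rw [degreeLT_eq_span_X_pow, Submodule.map_span]
  congr 1
  ext x
  simp [Fin.exists_iff, hX_pow]

theorem mem_span_range_algebraMap_pow_iff (v : ι → R) (d : ℕ) (x : ι → A) :
    x ∈ Submodule.span R (Set.range fun s : Fin d => fun l => algebraMap R A (v l) ^ (s : ℕ)) ↔
      ∃ P ∈ degreeLT R d, (fun l => algebraMap R A (P.eval (v l))) = x := by
  have hpi (P : R[X]) : (LinearMap.pi fun l => (aeval (algebraMap R A (v l))).toLinearMap) P =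
      fun l => algebraMap R A (P.eval (v l)) :=
    funext fun l => aeval_algebraMap_apply_eq_algebraMap_eval (v l) P
  simp only [span_range_pow_eq_map_degreeLT, Submodule.mem_map, hpi]

end VandermondeSpan

theorem exists_mem_span_range_algebraMap_pow_iff {R A ι κ : Type*} [CommRing R] [IsDomain R]
    [Semiring A] [Algebra R A] (hA : Function.Injective (algebraMap R A)) {v : ι → R}
    (e : κ → ι) {s : Finset κ} (hvs : Set.InjOn (v ∘ e) s) {d : ℕ} (hsd : s.card < d) (i : κ)
    (a : A) :
    (∃ x ∈ Submodule.span R (Set.range fun n : Fin d => fun l => algebraMap R A (v l) ^ (n : ℕ)),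
        (∀ j ∈ s, x (e j) = 0) ∧ x (e i) = a) ↔
      ∃ b : R, a = algebraMap R A (∏ j ∈ s, (v (e i) - v (e j))) * algebraMap R A b := by
  simp only [mem_span_range_algebraMap_pow_iff, exists_exists_and_eq_and, map_eq_zero_iff _ hA]
  constructor
  · rintro ⟨P, hP, hvanish, rfl⟩
    obtain ⟨b, hb⟩ :=
      (exists_mem_degreeLT_eval_eq_iff_prod_dvd hvs hsd i _).1 ⟨P, hP, hvanish, rfl⟩
    exact ⟨b, (congrArg _ hb).trans (map_mul _ _ _)⟩
  · rintro ⟨b, rfl⟩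
    obtain ⟨P, hP, hvanish, hPi⟩ :=
      (exists_mem_degreeLT_eval_eq_iff_prod_dvd hvs hsd i _).2 (dvd_mul_right _ b)
    exact ⟨P, hP, hvanish, (congrArg _ hPi).trans (map_mul _ _ _)⟩

theorem HahnSeries.order_prod {Γ R ι : Type*} [AddCommMonoid Γ] [LinearOrder Γ]
    [IsOrderedCancelAddMonoid Γ] [CommSemiring R] [NoZeroDivisors R] [Nontrivial R]
    (s : Finset ι) (f : ι → HahnSeries Γ R) (hf : ∀ j ∈ s, f j ≠ 0) :
    (∏ j ∈ s, f j).order = ∑ j ∈ s, (f j).order := by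
  classical
  induction s using Finset.induction_on with
  | empty => simp
  | insert a s ha ih =>
    rw [Finset.prod_insert ha, Finset.sum_insert ha, order_mul (hf a (by simp))
      (Finset.prod_ne_zero_iff.2 fun j hj => hf j (by simp [hj])),
      ih fun j hj => hf j (by simp [hj])]

namespace LaurentSeries

variable {k : Type*} [Field k]

theorem isUnit_powerSeriesPart {x : LaurentSeries k} (hx : x ≠ 0) :
    IsUnit x.powerSeriesPart := by
  rw [PowerSeries.isUnit_iff_constantCoeff, ← PowerSeries.coeff_zero_eq_constantCoeff_apply,
    powerSeriesPart_coeff, isUnit_iff_ne_zero, Nat.cast_zero, add_zero]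
  exact HahnSeries.coeff_order_eq_zero.not.2 hx

theorem X_zpow_order_mul_powerSeriesPart (x : LaurentSeries k) :
    ((PowerSeries.X : PowerSeries k) : LaurentSeries k) ^ x.order * x.powerSeriesPart = x := by
  rw [PowerSeries.coe_X, ← RatFunc.single_zpow, single_order_mul_powerSeriesPart]

theorem exists_eq_X_zpow_order_mul_iff {x : LaurentSeries k} (hx : x ≠ 0) (a : LaurentSeries k) :
    (∃ b : PowerSeries k, a = ((PowerSeries.X : PowerSeries k) : LaurentSeries k) ^ x.order * b) ↔
      ∃ b : PowerSeries k, a = x * b := by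
  obtain ⟨u, hu⟩ := isUnit_powerSeriesPart hx
  conv_rhs => rw [← X_zpow_order_mul_powerSeriesPart x, ← hu]
  constructor
  · rintro ⟨b, rfl⟩
    exact ⟨↑u⁻¹ * b, by rw [mul_assoc, ← map_mul, ← mul_assoc, Units.mul_inv, one_mul]⟩
  · rintro ⟨b, rfl⟩
    exact ⟨u * b, by rw [mul_assoc, ← map_mul]⟩

end LaurentSeries

/-- **The position of the regular point `x₀` of the affine Springer fiber for `GL_d`.**
Let `F = k((ε))`, `O = k[[ε]]`, let `γ 0, …, γ (d-1) ∈ O` be pairwise distinct and let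
`Λ ⊆ F^d` be the `O`-submodule generated by the vectors `v_s = (γ 0 ^ s, …, γ (d-1) ^ s)`,
`0 ≤ s ≤ d-1`.  Then for any permutation `σ` and any index `i`, the set of `i`-th coordinates
(in the order given by `σ`) of elements of `Λ` whose earlier `σ`-coordinates vanish is the
fractional ideal `ε^{m_i}·O`, with `m_i = ∑_{j<i} val(γ (σ i) - γ (σ j))`. -/
theorem regular_point_lattice_coordinates (k : Type*) [Field k] (d : ℕ)
    (γ : Fin d → PowerSeries k) (hγ : Function.Injective γ)
    (σ : Equiv.Perm (Fin d)) (i : Fin d) :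
    {a : LaurentSeries k |
        ∃ x ∈ Submodule.span (PowerSeries k)
            (Set.range fun s : Fin d =>
              (fun l : Fin d => ((γ l : LaurentSeries k) ^ (s : ℕ)))),
          (∀ j : Fin d, j < i → x (σ j) = 0) ∧ x (σ i) = a}
      = {a : LaurentSeries k | ∃ b : PowerSeries k,
          a = ((PowerSeries.X : PowerSeries k) : LaurentSeries k)
                ^ (∑ j ∈ Finset.Iio i,
                    ((γ (σ i) : LaurentSeries k) - (γ (σ j) : LaurentSeries k)).order)
              * (b : LaurentSeries k)} := by
  have hcoe := HahnSeries.ofPowerSeries_injective (Γ := ℤ) (R := k)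
  have hD : ∏ j ∈ Finset.Iio i, (γ (σ i) - γ (σ j)) ≠ 0 :=
    Finset.prod_ne_zero_iff.2 fun j hj =>
      sub_ne_zero.2 fun h => (Finset.mem_Iio.1 hj).ne' (σ.injective (hγ h))
  have horder : ∑ j ∈ Finset.Iio i, ((γ (σ i) : LaurentSeries k) - γ (σ j)).order =
      ((∏ j ∈ Finset.Iio i, (γ (σ i) - γ (σ j)) : PowerSeries k) : LaurentSeries k).order := by
    rw [map_prod, HahnSeries.order_prod _ _ fun j hj =>
      (map_ne_zero_iff _ hcoe).2 (Finset.prod_ne_zero_iff.1 hD j hj)]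
    simp only [map_sub]
  ext a
  rw [Set.mem_ofPred_eq, Set.mem_ofPred_eq, horder,
    LaurentSeries.exists_eq_X_zpow_order_mul_iff ((map_ne_zero_iff _ hcoe).2 hD)]
  simpa only [← LaurentSeries.coe_algebraMap, Finset.mem_Iio] using
    exists_mem_span_range_algebraMap_pow_iff hcoe σ (s := Finset.Iio i)
      (hγ.comp σ.injective).injOn (by simp) i a
end

section
/- Let k be a field, F = k((ε)), O = k[[ε]]. Let γ_1, γ_2 ∈ ε·O with γ_1 ≠ γ_2, and let L ⊆ F² be an O-lattice stable under γ : (x,y) ↦ (γ_1 x, γ_2 y). Let J = { x ∈ F : ∃ y, (x,y) ∈ L } and I = { x ∈ F : (x,0) ∈ L }. Then L is a free O-module of rank 2, the induced k-linear endomorphism γ̄ of the 2-dimensional k-vector space L/εL is nilpotent, and γ̄ ≠ 0 (equivalently, γ̄ is a regular element of End_k(L/εL), i.e. its minimal polynomial has degree 2) if and only if (γ_1 − γ_2)·J = I. -/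
/-!
Over the discrete valuation ring `O = k⟦ε⟧`, the lattice `L` is free of rank `dim_F F² = 2`, and
`L/εL` has dimension `2` over the residue field `k`. The operator `γ` satisfies
`γ² = (γ₁ + γ₂)γ - γ₁γ₂` with both coefficients in `εO`, so `γ̄² = 0`.
Since `γ p = ((γ₁ - γ₂)p₁, 0) + γ₂ p` and `γ₂ p ∈ εL`, we have `γ̄ = 0` iff `(γ₁ - γ₂)J ⊆ εI`.
Always `(γ₁ - γ₂)J ⊆ I`, and both are nonzero finitely generated `O`-submodules of `F`: over a
valuation ring a submodule of `I` not contained in `𝔪I` is all of `I`, while by Nakayama `I ⊄ 𝔪I`.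
-/

open scoped Pointwise

open Module IsLocalRing

theorem Module.finrank_quotient_ideal_smul_top {k R M : Type*} [Field k] [CommRing R] [Algebra k R]
    [AddCommGroup M] [Module R M] [Module k M] [IsScalarTower k R M] [Module.Free R M]
    {I : Ideal R} (hI : Function.Bijective (algebraMap k (R ⧸ I))) :
    finrank k (M ⧸ I • (⊤ : Submodule R M)) = finrank R M := by
  have : Nontrivial (R ⧸ I) := hI.1.nontrivial
  have : Nontrivial R := (Ideal.Quotient.mk_surjective (I := I)).nontrivial
  have hk : finrank k (R ⧸ I) = 1 := by
    rw [← (LinearEquiv.ofBijective (Algebra.linearMap k (R ⧸ I)) hI).finrank_eq, finrank_self]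
  rw [← ((TensorProduct.quotTensorEquivQuotSMul M I).restrictScalars k).finrank_eq,
    ← finrank_mul_finrank k (R ⧸ I), hk, one_mul, finrank_baseChange]

theorem PowerSeries.bijective_algebraMap_quotient_span_X (k : Type*) [Field k] :
    Function.Bijective (algebraMap k (PowerSeries k ⧸ Ideal.span {(X : PowerSeries k)})) := by
  have : Nontrivial (PowerSeries k ⧸ Ideal.span {(X : PowerSeries k)}) :=
    Ideal.Quotient.nontrivial_iff.mpr <| by
      rw [Ne, Ideal.span_singleton_eq_top]; exact X_prime.not_isUnit
  refine ⟨(algebraMap k _).injective, fun q => ?_⟩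
  obtain ⟨f, rfl⟩ := Ideal.Quotient.mk_surjective q
  refine ⟨constantCoeff f, ?_⟩
  rw [IsScalarTower.algebraMap_apply k (PowerSeries k), Ideal.Quotient.algebraMap_eq,
    Ideal.Quotient.eq, Ideal.mem_span_singleton, X_dvd_iff]
  simp

namespace Submodule

section Quotient

variable {R M M' : Type*} [CommRing R] [AddCommGroup M] [Module R M] [AddCommGroup M'] [Module R M']

theorem quotient_linearMap_eq_zero_iff {N : Submodule R M} {N' : Submodule R M'}
    {f : M ⧸ N →ₗ[R] M' ⧸ N'} {g : M → M'}
    (hf : ∀ p, f (Quotient.mk p) = Quotient.mk (g p)) :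
    f = 0 ↔ ∀ p, g p ∈ N' := by
  refine ⟨fun h p => ?_, fun h => LinearMap.ext fun q => ?_⟩
  · rw [← Quotient.mk_eq_zero, ← hf, h, LinearMap.zero_apply]
  · obtain ⟨p, rfl⟩ := Quotient.mk_surjective _ q
    rw [hf, LinearMap.zero_apply, Quotient.mk_eq_zero]
    exact h p

theorem mem_pointwise_smul_top_iff (N : Submodule R M) (r : R) (x : N) :
    x ∈ r • (⊤ : Submodule R N) ↔ (x : M) ∈ r • N := by
  simpa only [ideal_span_singleton_smul] using mem_smul_top_iff (Ideal.span {r}) N x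

theorem pointwise_smul_ne_bot {N : Submodule R M} {r : R} (hr : IsSMulRegular M r) (hN : N ≠ ⊥) :
    r • N ≠ ⊥ := by
  obtain ⟨x, hxN, hx⟩ := (Submodule.ne_bot_iff N).mp hN
  exact (Submodule.ne_bot_iff _).mpr ⟨r • x, smul_mem_pointwise_smul _ _ _ hxN,
    fun h => hx (hr (h.trans (smul_zero r).symm))⟩

end Quotient

section ValuationRing

variable {O K : Type*} [CommRing O] [IsDomain O] [ValuationRing O] [Field K] [Algebra O K]
  [IsFractionRing O K] {N M : Submodule O K}

theorem eq_of_le_of_not_le_maximalIdeal_smul (hle : N ≤ M) (h : ¬ N ≤ maximalIdeal O • M) :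
    N = M := by
  obtain ⟨d, hdN, hdM⟩ := SetLike.not_le_iff_exists.mp h
  have hd : d ≠ 0 := by rintro rfl; exact hdM (zero_mem _)
  refine le_antisymm hle fun b hb => ?_
  rcases ValuationRing.isInteger_or_isInteger O (b / d) with ⟨s, hs⟩ | ⟨s, hs⟩
  · have hbd : b = s • d := by rw [Algebra.smul_def, hs, div_mul_cancel₀ _ hd]
    exact hbd ▸ N.smul_mem s hdN
  · rcases eq_or_ne b 0 with rfl | hb0
    · exact zero_mem _
    have hdb : d = s • b := by rw [Algebra.smul_def, hs, inv_div, div_mul_cancel₀ _ hb0]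
    obtain ⟨u, rfl⟩ : IsUnit s := by
      by_contra hs
      exact hdM (hdb ▸ smul_mem_smul ((mem_maximalIdeal _).mpr hs) hb)
    have hbd : b = (↑u⁻¹ : O) • d := by rw [hdb, smul_smul, Units.inv_mul, one_smul]
    exact hbd ▸ N.smul_mem _ hdN

theorem eq_iff_not_le_maximalIdeal_smul (hle : N ≤ M) (hM : M.FG) (hN : N ≠ ⊥) :
    N = M ↔ ¬ N ≤ maximalIdeal O • M := by
  refine ⟨?_, eq_of_le_of_not_le_maximalIdeal_smul hle⟩
  rintro rfl hNN
  exact hN <| eq_bot_of_le_smul_of_le_jacobson_bot _ _ hM hNN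
    (jacobson_eq_maximalIdeal ⊥ bot_ne_top).ge

end ValuationRing

section Diagonal

variable {R V : Type*} [CommRing R] [AddCommGroup V] [Module R V] (L : Submodule R (V × V))

theorem sub_smul_map_fst_le_comap_inl {γ₁ γ₂ : R}
    (hstab : ∀ p ∈ L, (γ₁ • p.1, γ₂ • p.2) ∈ L) :
    (γ₁ - γ₂) • L.map (LinearMap.fst R V V) ≤ L.comap (LinearMap.inl R V V) := by
  intro x hx
  obtain ⟨_, ⟨p, hp, rfl⟩, rfl⟩ := (mem_smul_pointwise_iff_exists _ _ _).mp hx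
  have hdiff : ((γ₁ - γ₂) • p.1, (0 : V)) = (γ₁ • p.1, γ₂ • p.2) - γ₂ • p := by
    ext <;> simp [sub_smul]
  simpa [hdiff] using L.sub_mem (hstab p hp) (L.smul_mem γ₂ hp)

theorem inl_mem_smul_iff {r : R} (hr : IsSMulRegular V r) {x : V} :
    (x, (0 : V)) ∈ r • L ↔ x ∈ r • L.comap (LinearMap.inl R V V) := by
  simp only [mem_smul_pointwise_iff_exists, mem_comap, LinearMap.inl_apply]
  constructor
  · rintro ⟨w, hw, hwx⟩
    have hw2 : w.2 = 0 := hr (by simpa using congrArg Prod.snd hwx)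
    exact ⟨w.1, by rwa [← hw2], congrArg Prod.fst hwx⟩
  · rintro ⟨y, hy, rfl⟩
    exact ⟨(y, 0), hy, by simp⟩

theorem diag_mem_smul_iff {γ₁ γ₂ r : R} (hr : IsSMulRegular V r) (h₂ : r ∣ γ₂) :
    (∀ p ∈ L, (γ₁ • p.1, γ₂ • p.2) ∈ r • L) ↔
      (γ₁ - γ₂) • L.map (LinearMap.fst R V V) ≤ r • L.comap (LinearMap.inl R V V) := by
  obtain ⟨c, rfl⟩ := h₂
  have hdecomp : ∀ p : V × V,
      (γ₁ • p.1, (r * c) • p.2) = ((γ₁ - r * c) • p.1, 0) + r • c • p := by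
    intro p; ext <;> simp [sub_smul, mul_smul]
  have hmem : ∀ p ∈ L, r • c • p ∈ r • L :=
    fun p hp => smul_mem_pointwise_smul _ _ _ (L.smul_mem c hp)
  constructor
  · intro h x hx
    obtain ⟨_, ⟨p, hp, rfl⟩, rfl⟩ := (mem_smul_pointwise_iff_exists _ _ _).mp hx
    rw [← inl_mem_smul_iff L hr]
    simpa [hdecomp] using sub_mem (h p hp) (hmem p hp)
  · intro h p hp
    rw [hdecomp]
    exact add_mem ((inl_mem_smul_iff L hr).mpr
      (h (smul_mem_pointwise_smul _ _ _ (mem_map_of_mem hp)))) (hmem p hp)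

theorem diag_sq_mem_smul {γ₁ γ₂ r : R} (hstab : ∀ p ∈ L, (γ₁ • p.1, γ₂ • p.2) ∈ L)
    (h₁ : r ∣ γ₁) (h₂ : r ∣ γ₂) {p : V × V} (hp : p ∈ L) :
    (γ₁ • γ₁ • p.1, γ₂ • γ₂ • p.2) ∈ r • L := by
  obtain ⟨c, hc⟩ := dvd_add h₁ h₂
  obtain ⟨e, he⟩ := h₁.mul_right γ₂
  have hquad : (γ₁ • γ₁ • p.1, γ₂ • γ₂ • p.2) = r • (c • (γ₁ • p.1, γ₂ • p.2) - e • p) := by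
    ext <;> simp only [Prod.smul_fst, Prod.smul_snd, Prod.fst_sub, Prod.snd_sub, Prod.smul_mk]
    · linear_combination (norm := module) hc • γ₁ • p.1 - he • p.1
    · linear_combination (norm := module) hc • γ₂ • p.2 - he • p.2
  rw [hquad]
  exact smul_mem_pointwise_smul _ _ _ (sub_mem (smul_mem _ _ (hstab p hp)) (smul_mem _ _ hp))

theorem map_fst_ne_bot {A : Type*} [Semiring A] [Module A V] [Nontrivial V]
    (hspan : span A (L : Set (V × V)) = ⊤) : L.map (LinearMap.fst R V V) ≠ ⊥ := by
  intro h
  have hL : span A (L : Set (V × V)) ≤ LinearMap.ker (LinearMap.fst A V V) :=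
    span_le.mpr fun p hp => by simpa [h] using mem_map_of_mem (f := LinearMap.fst R V V) hp
  obtain ⟨v, hv⟩ := exists_ne (0 : V)
  have := hL (hspan ▸ mem_top : (v, (0 : V)) ∈ span A (L : Set (V × V)))
  simp [hv] at this

theorem FG.comap_inl [IsNoetherianRing R] {L : Submodule R (V × V)} (hL : L.FG) :
    (L.comap (LinearMap.inl R V V)).FG :=
  fg_of_fg_map_injective _ LinearMap.inl_injective (hL.of_le (map_comap_le _ _))

end Diagonal

end Submodule

/-- **GKM regularity criterion, rank-one case.**  Let `F = k((ε))` (an abstract fraction field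
of `O = k[[ε]]`), let `γ₁ ≠ γ₂` be elements of `ε·O`, and let `L ⊆ F²` be an `O`-lattice
(finitely generated, spanning `F²` over `F`) stable under `γ : (x,y) ↦ (γ₁x, γ₂y)`; let
`g : L → L` denote the endomorphism induced by `γ` and `ḡ` the induced endomorphism of
`L/εL`.  Then `L` is free of rank `2` over `O`, `L/εL` is a `2`-dimensional `k`-vector space,
`ḡ` is nilpotent, and `ḡ ≠ 0` if and only if `(γ₁ - γ₂)·J = I`, where
`J = {x | ∃ y, (x,y) ∈ L}` and `I = {x | (x,0) ∈ L}`. -/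
theorem gkm_rank_one_regularity (k : Type*) [Field k]
    (F : Type*) [Field F] [Algebra k F] [Algebra (PowerSeries k) F]
    [IsScalarTower k (PowerSeries k) F] [IsFractionRing (PowerSeries k) F]
    (γ₁ γ₂ : PowerSeries k)
    (h₁ : PowerSeries.X ∣ γ₁) (h₂ : PowerSeries.X ∣ γ₂) (hne : γ₁ ≠ γ₂)
    (L : Submodule (PowerSeries k) (F × F)) (hfg : L.FG)
    (hfull : Submodule.span F (L : Set (F × F)) = ⊤)
    (hstab : ∀ p ∈ L,
      (algebraMap (PowerSeries k) F γ₁ * p.1, algebraMap (PowerSeries k) F γ₂ * p.2) ∈ L)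
    (g : L →ₗ[PowerSeries k] L)
    (hg : ∀ p : L, (g p : F × F) =
      (algebraMap (PowerSeries k) F γ₁ * (p : F × F).1,
       algebraMap (PowerSeries k) F γ₂ * (p : F × F).2))
    (gbar : (L ⧸ ((PowerSeries.X : PowerSeries k) • (⊤ : Submodule (PowerSeries k) L)))
      →ₗ[PowerSeries k]
        (L ⧸ ((PowerSeries.X : PowerSeries k) • (⊤ : Submodule (PowerSeries k) L))))
    (hgbar : ∀ p : L, gbar (Submodule.Quotient.mk p) = Submodule.Quotient.mk (g p)) :
    Module.Free (PowerSeries k) L ∧ Module.finrank (PowerSeries k) L = 2 ∧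
    Module.finrank k
      (L ⧸ ((PowerSeries.X : PowerSeries k) • (⊤ : Submodule (PowerSeries k) L))) = 2 ∧
    IsNilpotent gbar ∧
    (gbar ≠ 0 ↔
      (algebraMap (PowerSeries k) F (γ₁ - γ₂)) • {x : F | ∃ y : F, (x, y) ∈ L}
        = {x : F | (x, (0 : F)) ∈ L}) := by
  have : IsTorsionFree (PowerSeries k) F :=
    isTorsionFree_iff_algebraMap_injective.mpr (IsFractionRing.injective _ _)
  have : L.IsLattice F := ⟨hfg, hfull⟩
  have hregular : ∀ {r : PowerSeries k}, r ≠ 0 → IsSMulRegular F r :=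
    fun hr => IsTorsionFree.isSMulRegular (IsRegular.of_ne_zero hr)
  simp only [← Algebra.smul_def] at hstab hg
  set J := L.map (LinearMap.fst (PowerSeries k) F F)
  set I := L.comap (LinearMap.inl (PowerSeries k) F F)
  have hrank : finrank (PowerSeries k) L = 2 :=
    finrank_eq_of_rank_eq (by rw [Submodule.IsLattice.rank' F L, rank_prod', rank_self]; norm_num)
  refine ⟨inferInstance, hrank, ?_, ⟨2, ?_⟩, ?_⟩
  · rw [← Submodule.ideal_span_singleton_smul,
      finrank_quotient_ideal_smul_top (PowerSeries.bijective_algebraMap_quotient_span_X k), hrank]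
  · refine (Submodule.quotient_linearMap_eq_zero_iff (g := fun p => g (g p)) fun p => ?_).mpr
      fun p => (L.mem_pointwise_smul_top_iff _ _).mpr ?_
    · rw [pow_two, Module.End.mul_apply, hgbar, hgbar]
    · simpa only [hg] using L.diag_sq_mem_smul hstab h₁ h₂ p.2
  have hgbar_eq_zero : gbar = 0 ↔ (γ₁ - γ₂) • J ≤ (PowerSeries.X : PowerSeries k) • I := by
    rw [Submodule.quotient_linearMap_eq_zero_iff hgbar,
      ← L.diag_mem_smul_iff (hregular PowerSeries.X_ne_zero) h₂]
    simp [Submodule.mem_pointwise_smul_top_iff, hg]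
  have hmax : maximalIdeal (PowerSeries k) • I = (PowerSeries.X : PowerSeries k) • I := by
    rw [PowerSeries.maximalIdeal_eq_span_X, Submodule.ideal_span_singleton_smul]
  have hcoe : (((γ₁ - γ₂) • J : Submodule (PowerSeries k) F) : Set F) =
      algebraMap (PowerSeries k) F (γ₁ - γ₂) • {x : F | ∃ y : F, (x, y) ∈ L} := by
    ext x; simp [Set.mem_smul_set, Algebra.smul_def, J]
  rw [ne_eq, hgbar_eq_zero, ← hmax, ← Submodule.eq_iff_not_le_maximalIdeal_smul
    (L.sub_smul_map_fst_le_comap_inl hstab) hfg.comap_inl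
    (Submodule.pointwise_smul_ne_bot (hregular (sub_ne_zero.mpr hne)) (L.map_fst_ne_bot hfull)),
    ← hcoe]
  exact SetLike.coe_set_eq.symm
end

section
/- Let n_1, n_2 be real numbers with 0 < n_1 ≤ n_2. In ℝ³, the convex hull of the six points (2n_1, n_2, 0), (n_1, n_1+n_2, 0), (0, n_1+n_2, n_1), (0, n_1, n_1+n_2), (n_1, 0, n_1+n_2), (2n_1, 0, n_2) equals the intersection of the convex hull of the three points (2n_1+n_2, 0, 0), (0, 2n_1+n_2, 0), (0, 0, 2n_1+n_2) with the convex hull of the three points (2n_1, n_1+n_2, −n_1), (−n_2, n_1+n_2, n_1+n_2), (2n_1, −n_1, n_1+n_2). -/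
/-- A convex combination of three points of `s` lies in `convexHull ℝ s`. -/
lemma combo3_mem_convexHull {s : Set (Fin 3 → ℝ)} {p q r x : Fin 3 → ℝ}
    (hp : p ∈ s) (hq : q ∈ s) (hr : r ∈ s) {a b c : ℝ}
    (ha : 0 ≤ a) (hb : 0 ≤ b) (hc : 0 ≤ c) (habc : a + b + c = 1)
    (hx : a • p + b • q + c • r = x) : x ∈ convexHull ℝ s := by
  subst hx
  have h := (convex_convexHull ℝ s).sum_mem (t := (Finset.univ : Finset (Fin 3)))
    (w := ![a, b, c]) (z := ![p, q, r])
    (by intro i _; fin_cases i <;> simpa)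
    (by simp [Fin.sum_univ_three, habc])
    (by intro i _; fin_cases i <;> simpa using (subset_convexHull ℝ s) ‹_›)
  simpa [Fin.sum_univ_three] using h

lemma mem_T1 {S : ℝ} (hS : 0 < S) {x : Fin 3 → ℝ}
    (h0 : 0 ≤ x 0) (h1 : 0 ≤ x 1) (h2 : 0 ≤ x 2) (hsum : x 0 + x 1 + x 2 = S) :
    x ∈ convexHull ℝ ({![S, 0, 0], ![0, S, 0], ![0, 0, S]} : Set (Fin 3 → ℝ)) := by
  refine combo3_mem_convexHull (p := ![S,0,0]) (q := ![0,S,0]) (r := ![0,0,S])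
    (a := x 0 / S) (b := x 1 / S) (c := x 2 / S)
    (by simp) (by simp) (by simp)
    (div_nonneg h0 hS.le) (div_nonneg h1 hS.le) (div_nonneg h2 hS.le)
    (by field_simp; linarith) ?_
  have h2eq : x 2 = S - x 0 - x 1 := by linarith
  funext i
  fin_cases i <;> simp [h2eq] <;> field_simp

lemma mem_T2 {n₁ n₂ : ℝ} (h₀ : 0 < n₁) (hn₂ : 0 < n₂) {x : Fin 3 → ℝ}
    (h0 : x 0 ≤ 2 * n₁) (h1 : x 1 ≤ n₁ + n₂) (h2 : x 2 ≤ n₁ + n₂)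
    (hsum : x 0 + x 1 + x 2 = 2 * n₁ + n₂) :
    x ∈ convexHull ℝ ({![2 * n₁, n₁ + n₂, -n₁], ![-n₂, n₁ + n₂, n₁ + n₂],
        ![2 * n₁, -n₁, n₁ + n₂]} : Set (Fin 3 → ℝ)) := by
  have hS : (0:ℝ) < 2 * n₁ + n₂ := by linarith
  refine combo3_mem_convexHull (p := ![2 * n₁, n₁ + n₂, -n₁]) (q := ![-n₂, n₁ + n₂, n₁ + n₂])
    (r := ![2 * n₁, -n₁, n₁ + n₂])
    (a := (n₁ + n₂ - x 2) / (2 * n₁ + n₂)) (b := (2 * n₁ - x 0) / (2 * n₁ + n₂))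
    (c := (n₁ + n₂ - x 1) / (2 * n₁ + n₂))
    (by simp) (by simp) (by simp)
    (div_nonneg (by linarith) hS.le) (div_nonneg (by linarith) hS.le)
    (div_nonneg (by linarith) hS.le)
    (by field_simp; linarith) ?_
  have h2eq : x 2 = 2 * n₁ + n₂ - x 0 - x 1 := by linarith
  funext i
  fin_cases i <;> simp [h2eq] <;> field_simp <;> ring

set_option maxHeartbeats 1600000 in
/-- **The hexagon `Ec(x₀)` as an intersection of two triangles (`GL₃`).**
For real numbers `0 < n₁ ≤ n₂`, the convex hull in `ℝ³` of the six points
`(2n₁, n₂, 0), (n₁, n₁+n₂, 0), (0, n₁+n₂, n₁), (0, n₁, n₁+n₂), (n₁, 0, n₁+n₂), (2n₁, 0, n₂)`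
equals the intersection of the convex hull of
`(2n₁+n₂, 0, 0), (0, 2n₁+n₂, 0), (0, 0, 2n₁+n₂)` with the convex hull of
`(2n₁, n₁+n₂, -n₁), (-n₂, n₁+n₂, n₁+n₂), (2n₁, -n₁, n₁+n₂)`. -/
theorem hexagon_eq_inter_triangles (n₁ n₂ : ℝ) (h₀ : 0 < n₁) (h₁₂ : n₁ ≤ n₂) :
    convexHull ℝ ({![2 * n₁, n₂, 0], ![n₁, n₁ + n₂, 0], ![0, n₁ + n₂, n₁],
        ![0, n₁, n₁ + n₂], ![n₁, 0, n₁ + n₂], ![2 * n₁, 0, n₂]} : Set (Fin 3 → ℝ)) =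
      convexHull ℝ ({![2 * n₁ + n₂, 0, 0], ![0, 2 * n₁ + n₂, 0],
          ![0, 0, 2 * n₁ + n₂]} : Set (Fin 3 → ℝ)) ∩
      convexHull ℝ ({![2 * n₁, n₁ + n₂, -n₁], ![-n₂, n₁ + n₂, n₁ + n₂],
          ![2 * n₁, -n₁, n₁ + n₂]} : Set (Fin 3 → ℝ)) := by
  have hn₂ : 0 < n₂ := h₀.trans_le h₁₂
  have hS : (0:ℝ) < 2 * n₁ + n₂ := by linarith
  apply Set.Subset.antisymm
  · -- hexagon hull ⊆ intersection of triangle hulls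
    apply convexHull_min _ ((convex_convexHull ℝ _).inter (convex_convexHull ℝ _))
    intro p hp
    simp only [Set.mem_insert_iff, Set.mem_singleton_iff] at hp
    rcases hp with rfl | rfl | rfl | rfl | rfl | rfl <;>
      refine ⟨mem_T1 hS ?_ ?_ ?_ ?_, mem_T2 h₀ hn₂ ?_ ?_ ?_ ?_⟩ <;>
      simp <;> linarith
  · rintro x ⟨hx1, hx2⟩
    -- extract inequalities from the two triangle hull memberships
    have hP1 : x ∈ {y : Fin 3 → ℝ | (0 ≤ y 0 ∧ 0 ≤ y 1 ∧ 0 ≤ y 2) ∧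
        y 0 + y 1 + y 2 = 2 * n₁ + n₂} := by
      refine convexHull_min ?_ ?_ hx1
      · intro p hp
        simp only [Set.mem_insert_iff, Set.mem_singleton_iff] at hp
        rcases hp with rfl | rfl | rfl <;> refine ⟨⟨?_, ?_, ?_⟩, ?_⟩ <;> simp <;> linarith
      · intro y hy z hz a b ha hb hab
        simp only [Set.mem_setOf_eq, Pi.add_apply, Pi.smul_apply, smul_eq_mul] at *
        obtain ⟨⟨hy0, hy1, hy2⟩, hys⟩ := hy
        obtain ⟨⟨hz0, hz1, hz2⟩, hzs⟩ := hz
        refine ⟨⟨?_, ?_, ?_⟩, ?_⟩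
        · nlinarith [mul_nonneg ha hy0, mul_nonneg hb hz0]
        · nlinarith [mul_nonneg ha hy1, mul_nonneg hb hz1]
        · nlinarith [mul_nonneg ha hy2, mul_nonneg hb hz2]
        · linear_combination a * hys + b * hzs + (2 * n₁ + n₂) * hab
    have hP2 : x ∈ {y : Fin 3 → ℝ | (y 0 ≤ 2 * n₁ ∧ y 1 ≤ n₁ + n₂ ∧ y 2 ≤ n₁ + n₂) ∧
        y 0 + y 1 + y 2 = 2 * n₁ + n₂} := by
      refine convexHull_min ?_ ?_ hx2
      · intro p hp
        simp only [Set.mem_insert_iff, Set.mem_singleton_iff] at hp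
        rcases hp with rfl | rfl | rfl <;> refine ⟨⟨?_, ?_, ?_⟩, ?_⟩ <;> simp <;> linarith
      · intro y hy z hz a b ha hb hab
        simp only [Set.mem_setOf_eq, Pi.add_apply, Pi.smul_apply, smul_eq_mul] at *
        obtain ⟨⟨hy0, hy1, hy2⟩, hys⟩ := hy
        obtain ⟨⟨hz0, hz1, hz2⟩, hzs⟩ := hz
        refine ⟨⟨?_, ?_, ?_⟩, ?_⟩
        · nlinarith [mul_le_mul_of_nonneg_left hy0 ha, mul_le_mul_of_nonneg_left hz0 hb]
        · nlinarith [mul_le_mul_of_nonneg_left hy1 ha, mul_le_mul_of_nonneg_left hz1 hb]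
        · nlinarith [mul_le_mul_of_nonneg_left hy2 ha, mul_le_mul_of_nonneg_left hz2 hb]
        · linear_combination a * hys + b * hzs + (2 * n₁ + n₂) * hab
    obtain ⟨⟨hx0, hx1', hx2'⟩, hsum⟩ := hP1
    obtain ⟨⟨hu0, hu1, hu2⟩, -⟩ := hP2
    have h2eq : x 2 = 2 * n₁ + n₂ - x 0 - x 1 := by linarith
    -- the six hexagon vertices
    have m0 : (![2 * n₁, n₂, 0] : Fin 3 → ℝ) ∈ ({![2 * n₁, n₂, 0], ![n₁, n₁ + n₂, 0],
        ![0, n₁ + n₂, n₁], ![0, n₁, n₁ + n₂], ![n₁, 0, n₁ + n₂], ![2 * n₁, 0, n₂]} :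
        Set (Fin 3 → ℝ)) := by simp
    have m1 : (![n₁, n₁ + n₂, 0] : Fin 3 → ℝ) ∈ ({![2 * n₁, n₂, 0], ![n₁, n₁ + n₂, 0],
        ![0, n₁ + n₂, n₁], ![0, n₁, n₁ + n₂], ![n₁, 0, n₁ + n₂], ![2 * n₁, 0, n₂]} :
        Set (Fin 3 → ℝ)) := by simp
    have m2 : (![0, n₁ + n₂, n₁] : Fin 3 → ℝ) ∈ ({![2 * n₁, n₂, 0], ![n₁, n₁ + n₂, 0],
        ![0, n₁ + n₂, n₁], ![0, n₁, n₁ + n₂], ![n₁, 0, n₁ + n₂], ![2 * n₁, 0, n₂]} :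
        Set (Fin 3 → ℝ)) := by simp
    have m3 : (![0, n₁, n₁ + n₂] : Fin 3 → ℝ) ∈ ({![2 * n₁, n₂, 0], ![n₁, n₁ + n₂, 0],
        ![0, n₁ + n₂, n₁], ![0, n₁, n₁ + n₂], ![n₁, 0, n₁ + n₂], ![2 * n₁, 0, n₂]} :
        Set (Fin 3 → ℝ)) := by simp
    have m4 : (![n₁, 0, n₁ + n₂] : Fin 3 → ℝ) ∈ ({![2 * n₁, n₂, 0], ![n₁, n₁ + n₂, 0],
        ![0, n₁ + n₂, n₁], ![0, n₁, n₁ + n₂], ![n₁, 0, n₁ + n₂], ![2 * n₁, 0, n₂]} :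
        Set (Fin 3 → ℝ)) := by simp
    have m5 : (![2 * n₁, 0, n₂] : Fin 3 → ℝ) ∈ ({![2 * n₁, n₂, 0], ![n₁, n₁ + n₂, 0],
        ![0, n₁ + n₂, n₁], ![0, n₁, n₁ + n₂], ![n₁, 0, n₁ + n₂], ![2 * n₁, 0, n₂]} :
        Set (Fin 3 → ℝ)) := by simp
    by_cases hd : n₂ * (x 0) ≤ n₁ * ((x 1) - n₁)
    · -- triangle v₃ v₁ v₂
      refine combo3_mem_convexHull m3 m1 m2
        (a := (n₁ + n₂ - (x 1)) / n₂) (b := (x 0) / n₁)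
        (c := (n₁ * ((x 1) - n₁) - n₂ * (x 0)) / (n₁ * n₂))
        (div_nonneg (by linarith) hn₂.le) (div_nonneg hx0 h₀.le)
        (div_nonneg (by linarith) (by positivity))
        (by field_simp; ring) ?_
      funext i
      fin_cases i <;> simp [h2eq] <;> field_simp <;> ring
    · push_neg at hd
      by_cases hc : (n₂ - n₁) * (x 0) ≤ 2 * n₁ * ((x 1) - n₁)
      · -- triangle v₃ v₀ v₁
        refine combo3_mem_convexHull m3 m0 m1
          (a := (2 * n₁ + n₂ - (x 0) - (x 1)) / (n₁ + n₂)) (b := (n₂ * (x 0) - n₁ * ((x 1) - n₁)) / (n₁ * (n₁ + n₂)))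
          (c := (2 * n₁ * ((x 1) - n₁) - (n₂ - n₁) * (x 0)) / (n₁ * (n₁ + n₂)))
          (div_nonneg (by linarith) (by linarith)) (div_nonneg (by linarith) (by positivity))
          (div_nonneg (by linarith) (by positivity))
          (by field_simp; linarith) ?_
        funext i
        fin_cases i <;> simp [h2eq] <;> field_simp <;> ring
      · push_neg at hc
        by_cases hb : 2 * n₁ ≤ (x 0) + 2 * (x 1)
        · -- triangle v₃ v₅ v₀
          refine combo3_mem_convexHull m3 m5 m0
            (a := (2 * n₁ - (x 0)) / (2 * n₁)) (b := ((n₂ - n₁) * (x 0) - 2 * n₁ * ((x 1) - n₁)) / (2 * n₁ * n₂))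
            (c := ((x 0) + 2 * (x 1) - 2 * n₁) / (2 * n₂))
            (div_nonneg (by linarith) (by linarith)) (div_nonneg (by linarith) (by positivity))
            (div_nonneg (by linarith) (by linarith))
            (by field_simp; ring) ?_
          funext i
          fin_cases i <;> simp [h2eq] <;> field_simp <;> ring
        · push_neg at hb
          -- triangle v₃ v₄ v₅
          refine combo3_mem_convexHull m3 m4 m5
            (a := (x 1) / n₁) (b := (2 * n₁ - (x 0) - 2 * (x 1)) / n₁)
            (c := ((x 0) + (x 1) - n₁) / n₁)
            (div_nonneg hx1' h₀.le) (div_nonneg (by linarith) h₀.le)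
            (div_nonneg (by linarith) h₀.le)
            (by field_simp; ring) ?_
          funext i
          fin_cases i <;> simp [h2eq] <;> field_simp <;> ring
end

section
/- For all integers 1 ≤ n_1 ≤ n_2, the following identity holds in the polynomial ring ℤ[q]: 4·∑_{i=1}^{n_1} i·q^{2n_1+n_2−i} + n_1·∑_{i=2n_1+1}^{n_1+n_2} (q^i + q^{i−1}) + ∑_{i=1}^{n_1−1} (n_1−i)·(q^{n_1+n_2+i} + q^{n_1+n_2+i−1}) + ∑_{i=0}^{n_2} (n_2+1−i)·q^{2n_1+i} + n_1·q^{2n_1} + ∑_{i=0}^{n_1−1} (i+1)·q^{n_1+i} + ∑_{i=0}^{n_1−1} ∑_{j=0}^{i} q^{i+j} − ∑_{i=0}^{n_1−1} ∑_{j=0}^{i} q^{2n_1+j} − 2·∑_{i=1}^{n_1} i·q^{2n_1+n_2−i} − ∑_{i=n_1}^{n_2−1} ∑_{j=0}^{i} q^{2n_1+j} = ∑_{i=1}^{n_1} i·(q^{2i−1}+q^{2i−2}) + (2n_1+1)·∑_{i=2n_1}^{n_1+n_2−1} q^{i} + 4·∑_{i=n_1+n_2}^{2n_1+n_2−1} (2n_1+n_2−i)·q^{i}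 + q^{2n_1+n_2}. -/
/-!
Each sum on either side is, after reindexing over a `range`, a geometric sum `∑ qⁱ`, or a sum
`∑ (i + 1) qⁱ` or `∑ (n - i) qⁱ` with linear coefficients, or a double sum of geometric sums.
Multiplied by `(q - 1)²` (by `(q² - 1)²` for the sums in `q²`) each of them has a closed form, so
`(q² - 1)²` times the identity becomes an identity between explicit polynomials in `q`, `q^n₁`,
`q^n₂`, which `ring` verifies; `(q² - 1)²` is a nonzero element of the domain `ℤ[q]`.
-/

open Polynomial Finset

theorem sum_Icc_eq_sum_range_add {M : Type*} [AddCommMonoid M] (f : ℕ → M) {c d n : ℕ}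
    (h : c + n = d + 1) : ∑ i ∈ Icc c d, f i = ∑ i ∈ range n, f (c + i) := by
  rw [← Ico_add_one_right_eq_Icc, sum_Ico_eq_sum_range, show d + 1 - c = n by omega]

theorem sum_Icc_zero_sub_one_add_sum_Icc_sub_one {M : Type*} [AddCommMonoid M] (f : ℕ → M)
    {m n : ℕ} (hm : 0 < m) (hmn : m ≤ n) :
    ∑ i ∈ Icc 0 (m - 1), f i + ∑ i ∈ Icc m (n - 1), f i = ∑ i ∈ range n, f i := by
  rw [← Ico_add_one_right_eq_Icc, ← Ico_add_one_right_eq_Icc,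
    Nat.sub_add_cancel (by omega : 1 ≤ m), Nat.sub_add_cancel (by omega),
    sum_Ico_consecutive _ (Nat.zero_le m) hmn, range_eq_Ico]

section ClosedForms

variable {R : Type*} [CommRing R] (y : R)

theorem sub_one_mul_sum_range_pow_add (o n : ℕ) :
    (y - 1) * ∑ i ∈ range n, y ^ (o + i) = y ^ o * (y ^ n - 1) := by
  simp only [pow_add, ← mul_sum]
  rw [mul_left_comm, mul_geom_sum]

theorem sub_one_sq_mul_sum_range_succ_mul_pow_add (o n : ℕ) :
    (y - 1) ^ 2 * ∑ i ∈ range n, ((i + 1 : ℕ) : R) * y ^ (o + i)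
      = y ^ o * (n * y ^ (n + 1) - (n + 1) * y ^ n + 1) := by
  induction n with
  | zero => simp
  | succ n ih =>
    rw [sum_range_succ, mul_add, ih, pow_add]
    push_cast
    ring

theorem sub_one_sq_mul_sum_range_sub_mul_pow_add (o n : ℕ) :
    (y - 1) ^ 2 * ∑ i ∈ range n, ((n - i : ℕ) : R) * y ^ (o + i)
      = y ^ o * (y ^ (n + 1) - (n + 1) * y + n) := by
  induction n with
  | zero => simp
  | succ n ih =>
    have shift : ∑ i ∈ range n, ((n + 1 - (i + 1) : ℕ) : R) * y ^ (o + (i + 1))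
        = y * ∑ i ∈ range n, ((n - i : ℕ) : R) * y ^ (o + i) := by
      rw [mul_sum]
      refine sum_congr rfl fun i _ => ?_
      rw [Nat.add_sub_add_right, ← add_assoc, pow_succ]
      ring
    rw [sum_range_succ', shift]
    push_cast
    linear_combination y * ih

theorem sub_one_sq_mul_sum_Icc_natCast_mul_pow_sub {o n m : ℕ} (h : o + n = m) :
    (y - 1) ^ 2 * ∑ i ∈ Icc 1 n, (i : R) * y ^ (m - i)
      = y ^ o * (y ^ (n + 1) - (n + 1) * y + n) := by
  rw [sum_Icc_eq_sum_range_add _ (n := n) (by omega), ← sum_range_reflect,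
    ← sub_one_sq_mul_sum_range_sub_mul_pow_add]
  congr 1
  refine sum_congr rfl fun i hi => ?_
  rw [mem_range] at hi
  rw [show 1 + (n - 1 - i) = n - i by omega, show m - (n - i) = o + i by omega]

theorem sub_one_sq_mul_sum_Icc_sub_mul_pow {c n d : ℕ} (h : c + n = d) :
    (y - 1) ^ 2 * ∑ i ∈ Icc c (d - 1), ((d - i : ℕ) : R) * y ^ i
      = y ^ c * (y ^ (n + 1) - (n + 1) * y + n) := by
  rcases n with _ | n
  · have hzero : ∀ i ∈ Icc c (d - 1), ((d - i : ℕ) : R) * y ^ i = 0 := fun i hi => by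
      rw [mem_Icc] at hi
      simp [show d - i = 0 by omega]
    simp [sum_eq_zero hzero]
  · rw [sum_Icc_eq_sum_range_add _ (n := n + 1) (by omega),
      ← sub_one_sq_mul_sum_range_sub_mul_pow_add]
    congr 1
    refine sum_congr rfl fun i hi => ?_
    rw [show d - (c + i) = n + 1 - i by omega]

theorem sub_one_mul_sum_Icc_pow_add_pow_sub_one {c d : ℕ} (h : c ≤ d) :
    (y - 1) * ∑ i ∈ Icc (c + 1) d, (y ^ i + y ^ (i - 1)) = (y + 1) * (y ^ d - y ^ c) := by
  obtain ⟨n, rfl⟩ := Nat.exists_eq_add_of_le h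
  rw [sum_Icc_eq_sum_range_add _ (n := n) (by omega)]
  have pair : ∀ i, y ^ (c + 1 + i) + y ^ (c + 1 + i - 1) = (y + 1) * y ^ (c + i) := fun i => by
    rw [show c + 1 + i = c + i + 1 by omega, Nat.add_sub_cancel, pow_succ]
    ring
  simp only [pair, ← mul_sum]
  linear_combination (y + 1) * sub_one_mul_sum_range_pow_add y c n

theorem sub_one_sq_mul_sum_Icc_sub_mul_pow_add_pow (N n : ℕ) :
    (y - 1) ^ 2 * ∑ i ∈ Icc 1 (n - 1), ((n - i : ℕ) : R) * (y ^ (N + i) + y ^ (N + i - 1))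
      = (y + 1) * y ^ N * (y ^ n - n * y + (n - 1)) := by
  rcases n with _ | n
  · simp
  · rw [sum_Icc_eq_sum_range_add _ (n := n) (by omega)]
    have pair : ∀ i, ((n + 1 - (1 + i) : ℕ) : R) * (y ^ (N + (1 + i)) + y ^ (N + (1 + i) - 1))
        = (y + 1) * (((n - i : ℕ) : R) * y ^ (N + i)) := fun i => by
      rw [show n + 1 - (1 + i) = n - i by omega, show N + (1 + i) = N + i + 1 by omega,
        Nat.add_sub_cancel, pow_succ]
      ring
    simp only [pair, ← mul_sum]
    push_cast
    linear_combination (y + 1) * sub_one_sq_mul_sum_range_sub_mul_pow_add y N n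

theorem sub_one_sq_mul_sum_Icc_zero_sub_mul_pow_add (c n : ℕ) :
    (y - 1) ^ 2 * ∑ i ∈ Icc 0 n, ((n + 1 - i : ℕ) : R) * y ^ (c + i)
      = y ^ c * (y ^ (n + 2) - (n + 2) * y + (n + 1)) := by
  rw [sum_Icc_eq_sum_range_add _ (n := n + 1) (by omega)]
  simp only [zero_add]
  rw [sub_one_sq_mul_sum_range_sub_mul_pow_add]
  push_cast
  ring

theorem sub_one_sq_mul_sum_Icc_zero_succ_mul_pow_add (c : ℕ) {n : ℕ} (hn : 0 < n) :
    (y - 1) ^ 2 * ∑ i ∈ Icc 0 (n - 1), ((i + 1 : ℕ) : R) * y ^ (c + i)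
      = y ^ c * (n * y ^ (n + 1) - (n + 1) * y ^ n + 1) := by
  rw [sum_Icc_eq_sum_range_add _ (n := n) (by omega)]
  simp only [zero_add]
  exact sub_one_sq_mul_sum_range_succ_mul_pow_add y c n

theorem sub_one_sq_mul_add_one_mul_sum_Icc_sum_Icc_pow_add {n : ℕ} (hn : 0 < n) :
    (y - 1) ^ 2 * (y + 1) * ∑ i ∈ Icc 0 (n - 1), ∑ j ∈ Icc 0 i, y ^ (i + j)
      = y * (y ^ (2 * n) - 1) - (y + 1) * (y ^ n - 1) := by
  rw [sum_Icc_eq_sum_range_add _ (n := n) (by omega)]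
  have row : ∀ i, (y - 1) * ∑ j ∈ Icc 0 (0 + i), y ^ (0 + i + j) = y * (y ^ 2) ^ i - y ^ i :=
    fun i => by
      rw [sum_Icc_eq_sum_range_add _ (n := i + 1) (by omega)]
      simp only [zero_add]
      rw [sub_one_mul_sum_range_pow_add]
      ring
  have rows : (y - 1) * ∑ i ∈ range n, ∑ j ∈ Icc 0 (0 + i), y ^ (0 + i + j)
      = y * ∑ i ∈ range n, (y ^ 2) ^ i - ∑ i ∈ range n, y ^ i := by
    rw [mul_sum, mul_sum, ← sum_sub_distrib]
    exact sum_congr rfl fun i _ => row i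
  linear_combination (y ^ 2 - 1) * rows + y * mul_geom_sum (y ^ 2) n - (y + 1) * mul_geom_sum y n

theorem sub_one_sq_mul_sum_range_sum_Icc_pow_add (c n : ℕ) :
    (y - 1) ^ 2 * ∑ i ∈ range n, ∑ j ∈ Icc 0 i, y ^ (c + j)
      = y ^ c * (y ^ (n + 1) - y - n * (y - 1)) := by
  have row : ∀ i, (y - 1) * ∑ j ∈ Icc 0 i, y ^ (c + j) = y ^ (c + 1) * y ^ i - y ^ c :=
    fun i => by
      rw [sum_Icc_eq_sum_range_add _ (n := i + 1) (by omega)]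
      simp only [zero_add]
      rw [sub_one_mul_sum_range_pow_add]
      ring
  have rows : (y - 1) * ∑ i ∈ range n, ∑ j ∈ Icc 0 i, y ^ (c + j)
      = y ^ (c + 1) * ∑ i ∈ range n, y ^ i - n * y ^ c := by
    rw [mul_sum, sum_congr rfl fun i _ => row i, sum_sub_distrib, sum_const, card_range,
      nsmul_eq_mul, mul_sum]
  linear_combination (y - 1) * rows + y ^ (c + 1) * mul_geom_sum y n

theorem sq_sub_one_sq_mul_sum_Icc_natCast_mul_pow_odd_add_pow_even (n : ℕ) :
    (y ^ 2 - 1) ^ 2 * ∑ i ∈ Icc 1 n, (i : R) * (y ^ (2 * i - 1) + y ^ (2 * i - 2))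
      = (y + 1) * (n * y ^ (2 * n + 2) - (n + 1) * y ^ (2 * n) + 1) := by
  rw [sum_Icc_eq_sum_range_add _ (n := n) (by omega)]
  have pair : ∀ i, ((1 + i : ℕ) : R) * (y ^ (2 * (1 + i) - 1) + y ^ (2 * (1 + i) - 2))
      = (y + 1) * (((i + 1 : ℕ) : R) * (y ^ 2) ^ (0 + i)) := fun i => by
    rw [show 2 * (1 + i) - 1 = 2 * i + 1 by omega, show 2 * (1 + i) - 2 = 2 * i by omega,
      zero_add, add_comm 1 i, pow_succ, pow_mul]
    ring
  simp only [pair, ← mul_sum]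
  linear_combination (y + 1) * sub_one_sq_mul_sum_range_succ_mul_pow_add (y ^ 2) 0 n

theorem sub_one_mul_sum_Icc_sub_one_pow {c d : ℕ} (h : c ≤ d) (hd : 0 < d) :
    (y - 1) * ∑ i ∈ Icc c (d - 1), y ^ i = y ^ d - y ^ c := by
  obtain ⟨n, rfl⟩ := Nat.exists_eq_add_of_le h
  rw [sum_Icc_eq_sum_range_add _ (n := n) (by omega), sub_one_mul_sum_range_pow_add]
  ring

end ClosedForms

/-- **Poincaré polynomial identity for `GL₃`** (in the variable `q = t²`):  the sum of the
contributions of the affine cells of `𝒳_γ ∩ Sch(2n₁+n₂,0,0)` (regions `R₁, R'₁, R₂, R'₂, R₃,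
R₄, R'₄`) minus the contributions of the cells paving the complement of the fundamental domain
`F_γ` (regions `T₁, T₂, T₃, T'₁`) equals the Poincaré polynomial `P_{(n₁,n₂)}` written in
`q = t²`. -/
theorem gl3_poincare_polynomial_identity (n₁ n₂ : ℕ) (h₁ : 1 ≤ n₁) (h₁₂ : n₁ ≤ n₂) :
    (4 * ∑ i ∈ Icc 1 n₁, (i : Polynomial ℤ) * X ^ (2 * n₁ + n₂ - i)
      + (n₁ : Polynomial ℤ) * ∑ i ∈ Icc (2 * n₁ + 1) (n₁ + n₂), (X ^ i + X ^ (i - 1))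
      + ∑ i ∈ Icc 1 (n₁ - 1),
          ((n₁ - i : ℕ) : Polynomial ℤ) * (X ^ (n₁ + n₂ + i) + X ^ (n₁ + n₂ + i - 1))
      + ∑ i ∈ Icc 0 n₂, ((n₂ + 1 - i : ℕ) : Polynomial ℤ) * X ^ (2 * n₁ + i)
      + (n₁ : Polynomial ℤ) * X ^ (2 * n₁)
      + ∑ i ∈ Icc 0 (n₁ - 1), ((i + 1 : ℕ) : Polynomial ℤ) * X ^ (n₁ + i)
      + ∑ i ∈ Icc 0 (n₁ - 1), ∑ j ∈ Icc 0 i, (X : Polynomial ℤ) ^ (i + j)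
      - ∑ i ∈ Icc 0 (n₁ - 1), ∑ j ∈ Icc 0 i, (X : Polynomial ℤ) ^ (2 * n₁ + j)
      - 2 * ∑ i ∈ Icc 1 n₁, (i : Polynomial ℤ) * X ^ (2 * n₁ + n₂ - i)
      - ∑ i ∈ Icc n₁ (n₂ - 1), ∑ j ∈ Icc 0 i, (X : Polynomial ℤ) ^ (2 * n₁ + j))
    = ∑ i ∈ Icc 1 n₁, (i : Polynomial ℤ) * (X ^ (2 * i - 1) + X ^ (2 * i - 2))
      + ((2 * n₁ + 1 : ℕ) : Polynomial ℤ) * ∑ i ∈ Icc (2 * n₁) (n₁ + n₂ - 1), X ^ i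
      + 4 * ∑ i ∈ Icc (n₁ + n₂) (2 * n₁ + n₂ - 1),
          ((2 * n₁ + n₂ - i : ℕ) : Polynomial ℤ) * X ^ i
      + X ^ (2 * n₁ + n₂) := by
  have hM : ((X : ℤ[X]) ^ 2 - 1) ^ 2 ≠ 0 :=
    pow_ne_zero 2 (by simpa using X_pow_sub_C_ne_zero two_pos (1 : ℤ))
  have h2n₁ : 2 * n₁ ≤ n₁ + n₂ := by omega
  have split := sum_Icc_zero_sub_one_add_sum_Icc_sub_one
    (fun i => ∑ j ∈ Icc 0 i, (X : ℤ[X]) ^ (2 * n₁ + j)) h₁ h₁₂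
  have lhs₇ := sub_one_sq_mul_sum_range_sum_Icc_pow_add (X : ℤ[X]) (2 * n₁) n₂
  have lhs₁ := sub_one_sq_mul_sum_Icc_natCast_mul_pow_sub (X : ℤ[X])
    (o := n₁ + n₂) (n := n₁) (m := 2 * n₁ + n₂) (by omega)
  have lhs₂ := sub_one_mul_sum_Icc_pow_add_pow_sub_one (X : ℤ[X]) h2n₁
  have lhs₃ := sub_one_sq_mul_sum_Icc_sub_mul_pow_add_pow (X : ℤ[X]) (n₁ + n₂) n₁
  have lhs₄ := sub_one_sq_mul_sum_Icc_zero_sub_mul_pow_add (X : ℤ[X]) (2 * n₁) n₂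
  have lhs₅ := sub_one_sq_mul_sum_Icc_zero_succ_mul_pow_add (X : ℤ[X]) n₁ h₁
  have lhs₆ := sub_one_sq_mul_add_one_mul_sum_Icc_sum_Icc_pow_add (X : ℤ[X]) h₁
  have rhs₁ := sq_sub_one_sq_mul_sum_Icc_natCast_mul_pow_odd_add_pow_even (X : ℤ[X]) n₁
  have rhs₂ := sub_one_mul_sum_Icc_sub_one_pow (X : ℤ[X]) h2n₁ (by omega)
  have rhs₃ := sub_one_sq_mul_sum_Icc_sub_mul_pow (X : ℤ[X])
    (c := n₁ + n₂) (n := n₁) (d := 2 * n₁ + n₂) (by omega)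
  refine mul_left_cancel₀ hM ?_
  linear_combination (norm := (push_cast; ring))
    2 * (X + 1) ^ 2 * lhs₁ + n₁ * (X - 1) * (X + 1) ^ 2 * lhs₂ + (X + 1) ^ 2 * (lhs₃ + lhs₄ + lhs₅)
      + (X + 1) * lhs₆ - (X ^ 2 - 1) ^ 2 * split - (X + 1) ^ 2 * lhs₇
      - rhs₁ - (2 * n₁ + 1) * (X - 1) * (X + 1) ^ 2 * rhs₂ - 4 * (X + 1) ^ 2 * rhs₃
end

section
/- For integers 1 ≤ n_1 ≤ n_2 define P_{(n_1,n_2)}(t) = ∑_{i=1}^{n_1} i(t^{4i−2}+t^{4i−4}) + ∑_{i=2n_1}^{n_1+n_2−1} (2n_1+1)t^{2i} + ∑_{i=n_1+n_2}^{2n_1+n_2−1} 4(2n_1+n_2−i)t^{2i} + t^{4n_1+2n_2} ∈ ℤ[t]. Then in the formal power series ring ℤ[t][[T_1, T_2]] (where each of the series 1−T_2, 1−T_1T_2, 1−t²T_2, 1−t⁴T_1T_2, 1−t⁶T_1T_2 has constant term 1 and is hence invertible) one has: ∑_{n_2=1}^{∞} ∑_{n_1=1}^{n_2} P_{(n_1,n_2)}(t)·T_1^{n_1}T_2^{n_2}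 = (t²+1)T_1T_2 · [(1−T_2)(1−T_1T_2)(1−t⁴T_1T_2)²]^{−1} + t⁴T_1T_2²(3−t⁴T_1T_2) · [(1−T_2)(1−t²T_2)(1−t⁴T_1T_2)²]^{−1} + 4t⁴T_1T_2 · [(1−t²T_2)(1−t⁴T_1T_2)²(1−t⁶T_1T_2)]^{−1} + t⁶T_1T_2 · [(1−t²T_2)(1−t⁶T_1T_2)]^{−1}. -/
open Finset

/-- The Poincaré polynomial `P_{(n₁,n₂)}(t)` of the fundamental domain `F_γ` for `GL₃`
with root valuation `(n₁, n₂)`, `n₁ ≤ n₂`. -/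
noncomputable def gl3PoincarePoly (n₁ n₂ : ℕ) : Polynomial ℤ :=
  ∑ i ∈ Icc 1 n₁, (i : Polynomial ℤ) *
      (Polynomial.X ^ (4 * i - 2) + Polynomial.X ^ (4 * i - 4))
  + ∑ i ∈ Icc (2 * n₁) (n₁ + n₂ - 1),
      ((2 * n₁ + 1 : ℕ) : Polynomial ℤ) * Polynomial.X ^ (2 * i)
  + ∑ i ∈ Icc (n₁ + n₂) (2 * n₁ + n₂ - 1),
      ((4 * (2 * n₁ + n₂ - i) : ℕ) : Polynomial ℤ) * Polynomial.X ^ (2 * i)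
  + Polynomial.X ^ (4 * n₁ + 2 * n₂)

/-- The constant `t`-polynomial viewed in `ℤ[t][[T₁, T₂]]`. -/
noncomputable def gl3C (p : Polynomial ℤ) : MvPowerSeries (Fin 2) (Polynomial ℤ) :=
  MvPowerSeries.C (σ := Fin 2) (R := Polynomial ℤ) p

/-- The variable `T₁` of `ℤ[t][[T₁, T₂]]`. -/
noncomputable def gl3T₁ : MvPowerSeries (Fin 2) (Polynomial ℤ) := MvPowerSeries.X 0

/-- The variable `T₂` of `ℤ[t][[T₁, T₂]]`. -/
noncomputable def gl3T₂ : MvPowerSeries (Fin 2) (Polynomial ℤ) := MvPowerSeries.X 1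

/-!
Put `n₂ = n₁ + k`. Every summand of `P_{(n₁,n₂)}(t)` is then a function of `n₁` times one
of `1`, `∑_{i<k} t^{2i}`, `t^{2k}`, so each of the four rational terms is a product
`a(T₁T₂) · b(T₂)` of two univariate series. Each of these is rational with the stated
denominator: multiplying by `1 - cX` takes first differences `f (n+1) - c f n` of
coefficients, and peeling off the factors one by one ends at the numerator.
-/

theorem Finsupp.eq_single_zero_add_single_one_iff (e : Fin 2 →₀ ℕ) (a b : ℕ) :
    e = Finsupp.single 0 a + Finsupp.single 1 b ↔ e 0 = a ∧ e 1 = b := by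
  constructor
  · rintro rfl
    simp
  · rintro ⟨h0, h1⟩
    ext i
    fin_cases i <;> simp [h0, h1]

namespace PowerSeries

variable {R : Type*} [CommRing R]

theorem one_sub_C_mul_X_mul_mk_eq {c : R} {f : ℕ → R} {p : R⟦X⟧}
    (h0 : coeff 0 p = f 0) (hsucc : ∀ n, coeff (n + 1) p = f (n + 1) - c * f n) :
    (1 - C c * X) * mk f = p := by
  ext n
  rcases n with _ | n
  · simp [h0]
  · simp [hsucc, sub_mul, mul_assoc]

theorem one_sub_C_mul_X_mul_mk_pow (c : R) : (1 - C c * X) * mk (c ^ ·) = 1 :=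
  one_sub_C_mul_X_mul_mk_eq (by simp) fun n => by simp [coeff_one, pow_succ']

theorem one_sub_C_mul_X_sq_mul_mk_succ_mul_pow (c : R) :
    (1 - C c * X) ^ 2 * mk (fun n => (n + 1) * c ^ n) = 1 := by
  have h : (1 - C c * X) * mk (fun n => (n + 1) * c ^ n) = mk (c ^ ·) :=
    one_sub_C_mul_X_mul_mk_eq (by simp) fun n => by simp only [coeff_mk]; push_cast; ring
  rw [sq, mul_assoc, h, one_sub_C_mul_X_mul_mk_pow]

theorem one_sub_X_mul_one_sub_C_mul_X_mul_mk_geom_sum (c : R) :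
    (1 - X) * (1 - C c * X) * mk (fun n => ∑ i ∈ range n, c ^ i) = X := by
  have h : (1 - C c * X) * mk (fun n => ∑ i ∈ range n, c ^ i) = X * mk 1 :=
    one_sub_C_mul_X_mul_mk_eq (by simp) fun n => by
      simp [coeff_succ_X_mul, Finset.sum_range_succ', pow_succ', ← Finset.mul_sum]
  rw [mul_assoc, h, mul_left_comm, mul_comm (1 - X), mk_one_mul_one_sub_eq_one, mul_one]

theorem hasSubst_X_zero_mul_X_one :
    HasSubst (MvPowerSeries.X 0 * MvPowerSeries.X 1 : MvPowerSeries (Fin 2) R) :=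
  HasSubst.of_constantCoeff_zero (by simp)

@[simp]
theorem substAlgHom_C {σ : Type*} {a : MvPowerSeries σ R} (ha : HasSubst a) (c : R) :
    substAlgHom ha (C c) = MvPowerSeries.C c := by
  rw [coe_substAlgHom, subst_C]

theorem coeff_subst_X_zero_mul_X_one (a : R⟦X⟧) (e : Fin 2 →₀ ℕ) :
    MvPowerSeries.coeff e (a.subst (MvPowerSeries.X 0 * MvPowerSeries.X 1)) =
      if e 0 = e 1 then coeff (e 0) a else 0 := by
  have hpow (d : ℕ) : (MvPowerSeries.X 0 * MvPowerSeries.X 1 : MvPowerSeries (Fin 2) R) ^ d =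
      MvPowerSeries.monomial (Finsupp.single 0 d + Finsupp.single 1 d) 1 := by
    rw [mul_pow, MvPowerSeries.X_pow_eq, MvPowerSeries.X_pow_eq,
      MvPowerSeries.monomial_mul_monomial, one_mul]
  rw [coeff_subst hasSubst_X_zero_mul_X_one, finsum_eq_single _ (e 0)]
  · simp only [hpow, MvPowerSeries.coeff_monomial, Finsupp.eq_single_zero_add_single_one_iff,
      smul_eq_mul]
    split_ifs <;> simp_all
  · intro d hd
    simp only [hpow, MvPowerSeries.coeff_monomial, Finsupp.eq_single_zero_add_single_one_iff]
    rw [if_neg (fun h => hd h.1.symm), smul_zero]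

/-- `diagProd a b = a(T₁T₂) · b(T₂)`. -/
noncomputable def diagProd (a b : R⟦X⟧) : MvPowerSeries (Fin 2) R :=
  substAlgHom hasSubst_X_zero_mul_X_one a * substAlgHom (HasSubst.X (1 : Fin 2)) b

theorem coeff_diagProd (a b : R⟦X⟧) (m n : ℕ) :
    MvPowerSeries.coeff (Finsupp.single 0 m + Finsupp.single 1 n) (diagProd a b) =
      if m ≤ n then coeff m a * coeff (n - m) b else 0 := by
  have support : ∀ p r : Fin 2 →₀ ℕ, p + r = Finsupp.single 0 m + Finsupp.single 1 n →
      MvPowerSeries.coeff p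
          (a.subst (MvPowerSeries.X 0 * MvPowerSeries.X 1 : MvPowerSeries (Fin 2) R)) *
        MvPowerSeries.coeff r (b.subst (MvPowerSeries.X 1 : MvPowerSeries (Fin 2) R)) ≠ 0 →
      m ≤ n ∧ p = Finsupp.single 0 m + Finsupp.single 1 m ∧ r = Finsupp.single 1 (n - m) := by
    intro p r hpr hne
    simp only [coeff_subst_X_zero_mul_X_one, coeff_subst_single, ite_mul, mul_ite, zero_mul,
      mul_zero, ne_eq, ite_eq_right_iff, not_forall] at hne
    obtain ⟨hr, hp, -⟩ := hne
    have h0 := DFunLike.congr_fun hpr 0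
    have h1 := DFunLike.congr_fun hpr 1
    rw [hr] at h0 h1
    simp only [Finsupp.coe_add, Pi.add_apply, Finsupp.single_eq_same, ne_eq, zero_ne_one,
      one_ne_zero, not_false_eq_true, Finsupp.single_eq_of_ne, add_zero, zero_add] at h0 h1
    refine ⟨by omega,
      (Finsupp.eq_single_zero_add_single_one_iff _ _ _).2 ⟨by omega, by omega⟩, ?_⟩
    rw [hr]
    congr 1
    omega
  rw [diagProd, coe_substAlgHom, coe_substAlgHom, MvPowerSeries.coeff_mul]
  split_ifs with hmn
  · rw [Finset.sum_eq_single (Finsupp.single 0 m + Finsupp.single 1 m, Finsupp.single 1 (n - m))]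
    · simp [coeff_subst_X_zero_mul_X_one, coeff_subst_single]
    · rintro ⟨p, r⟩ hpr hne
      by_contra h
      obtain ⟨-, rfl, rfl⟩ := support p r (Finset.HasAntidiagonal.mem_antidiagonal.mp hpr) h
      exact hne rfl
    · intro h
      refine absurd (Finset.HasAntidiagonal.mem_antidiagonal.mpr ?_) h
      rw [add_assoc, ← Finsupp.single_add]
      congr 2
      omega
  · refine Finset.sum_eq_zero fun ⟨p, r⟩ hpr => ?_
    by_contra h
    exact hmn (support p r (Finset.HasAntidiagonal.mem_antidiagonal.mp hpr) h).1

theorem diagProd_mul_diagProd (a b a' b' : R⟦X⟧) :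
    diagProd a b * diagProd a' b' = diagProd (a * a') (b * b') := by
  simp only [diagProd, map_mul]
  ring

theorem constantCoeff_diagProd (a b : R⟦X⟧) :
    MvPowerSeries.constantCoeff (diagProd a b) = constantCoeff a * constantCoeff b := by
  simpa using coeff_diagProd a b 0 0

theorem mul_invOfUnit_eq_diagProd {a b Da Db Na Nb : R⟦X⟧} {N D : MvPowerSeries (Fin 2) R}
    (ha : Da * a = Na) (hb : Db * b = Nb)
    (hDa : constantCoeff Da = 1) (hDb : constantCoeff Db = 1)
    (hN : N = diagProd Na Nb) (hD : D = diagProd Da Db) :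
    N * MvPowerSeries.invOfUnit D 1 = diagProd a b := by
  rw [hN, hD, ← ha, ← hb, ← diagProd_mul_diagProd, mul_right_comm,
    MvPowerSeries.mul_invOfUnit, one_mul]
  simp [constantCoeff_diagProd, hDa, hDb]

end PowerSeries

namespace GL3

open PowerSeries

section

variable {R : Type*} [CommRing R] (q : R)

-- `diagCoeffᵢ q m` is the factor depending on `n₁ = m + 1` in the `i`-th summand of `P`.
def diagCoeff₁ (m : ℕ) : R :=
  ∑ i ∈ Icc 1 (m + 1), (i : R) * (q ^ (4 * i - 2) + q ^ (4 * i - 4))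

def diagCoeff₂ (m : ℕ) : R := (2 * m + 3 : R) * q ^ (4 * m + 4)

def diagCoeff₃ (m : ℕ) : R :=
  ∑ j ∈ range (m + 1), ((4 * (m + 1 - j) : ℕ) : R) * q ^ (4 * m + 4 + 2 * j)

def diagCoeff₄ (m : ℕ) : R := q ^ (6 * m + 6)

theorem mul_mk_diagCoeff₁ :
    (1 - X) * (1 - C (q ^ 4) * X) ^ 2 * PowerSeries.mk (diagCoeff₁ q) = C (q ^ 2 + 1) := by
  have h : (1 - C 1 * X) * PowerSeries.mk (diagCoeff₁ q)
      = C (q ^ 2 + 1) * PowerSeries.mk (fun n => (n + 1) * (q ^ 4) ^ n) := by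
    refine one_sub_C_mul_X_mul_mk_eq ?_ fun n => ?_
    · simp [diagCoeff₁]
    · simp only [coeff_C_mul, coeff_mk, diagCoeff₁,
        Finset.sum_Icc_succ_top (by omega : 1 ≤ n + 1 + 1)]
      rw [show 4 * (n + 1 + 1) - 2 = 4 * (n + 1) + 2 by omega,
        show 4 * (n + 1 + 1) - 4 = 4 * (n + 1) by omega]
      push_cast
      ring
  rw [map_one, one_mul] at h
  rw [mul_comm (1 - X), mul_assoc, h, mul_left_comm, one_sub_C_mul_X_sq_mul_mk_succ_mul_pow,
    mul_one]

theorem mul_mk_diagCoeff₂ :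
    (1 - C (q ^ 4) * X) ^ 2 * PowerSeries.mk (diagCoeff₂ q)
      = C (q ^ 4) * (3 - C (q ^ 4) * X) := by
  have h : PowerSeries.mk (diagCoeff₂ q)
      = C (2 * q ^ 4) * PowerSeries.mk (fun n => (n + 1) * (q ^ 4) ^ n)
        + C (q ^ 4) * PowerSeries.mk ((q ^ 4) ^ ·) := by
    ext n
    simp only [diagCoeff₂, coeff_mk, map_add, coeff_C_mul]
    ring
  rw [h, mul_add, mul_left_comm, one_sub_C_mul_X_sq_mul_mk_succ_mul_pow, sq, mul_left_comm,
    mul_assoc, one_sub_C_mul_X_mul_mk_pow]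
  simp only [map_mul, map_ofNat]
  ring

theorem mul_mk_diagCoeff₃ :
    (1 - C (q ^ 4) * X) ^ 2 * (1 - C (q ^ 6) * X) * PowerSeries.mk (diagCoeff₃ q)
      = C (4 * q ^ 4) := by
  have h : (1 - C (q ^ 6) * X) * PowerSeries.mk (diagCoeff₃ q)
      = C (4 * q ^ 4) * PowerSeries.mk (fun n => (n + 1) * (q ^ 4) ^ n) := by
    refine one_sub_C_mul_X_mul_mk_eq ?_ fun n => ?_
    · simp [diagCoeff₃]
    · simp only [coeff_C_mul, coeff_mk, diagCoeff₃]
      rw [Finset.sum_range_succ' _ (n + 1), Finset.mul_sum]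
      have hterm : ∀ j ∈ range (n + 1),
          ((4 * (n + 1 + 1 - (j + 1)) : ℕ) : R) * q ^ (4 * (n + 1) + 4 + 2 * (j + 1))
            = q ^ 6 * (((4 * (n + 1 - j) : ℕ) : R) * q ^ (4 * n + 4 + 2 * j)) := fun j _ => by
        rw [Nat.add_sub_add_right]
        ring
      rw [Finset.sum_congr rfl hterm]
      push_cast
      ring
  rw [mul_assoc, h, mul_left_comm, one_sub_C_mul_X_sq_mul_mk_succ_mul_pow, mul_one]

theorem mul_mk_diagCoeff₄ :
    (1 - C (q ^ 6) * X) * PowerSeries.mk (diagCoeff₄ q) = C (q ^ 6) := by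
  have h : PowerSeries.mk (diagCoeff₄ q) = C (q ^ 6) * PowerSeries.mk ((q ^ 6) ^ ·) := by
    ext n
    simp only [diagCoeff₄, coeff_mk, coeff_C_mul]
    ring
  rw [h, mul_left_comm, one_sub_C_mul_X_mul_mk_pow, mul_one]

end

local notation "t" => (Polynomial.X : Polynomial ℤ)

theorem gl3PoincarePoly_succ_add (m k : ℕ) :
    gl3PoincarePoly (m + 1) (m + 1 + k) =
      diagCoeff₁ t m + diagCoeff₂ t m * ∑ i ∈ range k, (t ^ 2) ^ i
        + diagCoeff₃ t m * (t ^ 2) ^ k + diagCoeff₄ t m * (t ^ 2) ^ k := by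
  have hIcc (a b : ℕ) : Icc (a + 1) (a + 1 + b - 1) = Ico (a + 1) (a + 1 + b) := by
    ext i
    simp only [mem_Icc, mem_Ico]
    omega
  have h₂ : ∑ i ∈ Icc (2 * (m + 1)) (m + 1 + (m + 1 + k) - 1),
      ((2 * (m + 1) + 1 : ℕ) : Polynomial ℤ) * t ^ (2 * i)
        = diagCoeff₂ t m * ∑ i ∈ range k, (t ^ 2) ^ i := by
    rw [show 2 * (m + 1) = 2 * m + 1 + 1 by ring,
      show m + 1 + (m + 1 + k) = 2 * m + 1 + 1 + k by ring, hIcc, sum_Ico_eq_sum_range, mul_sum]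
    refine sum_congr (by simp) fun i _ => ?_
    simp only [diagCoeff₂]
    push_cast
    ring
  have h₃ : ∑ i ∈ Icc (m + 1 + (m + 1 + k)) (2 * (m + 1) + (m + 1 + k) - 1),
      ((4 * (2 * (m + 1) + (m + 1 + k) - i) : ℕ) : Polynomial ℤ) * t ^ (2 * i)
        = diagCoeff₃ t m * (t ^ 2) ^ k := by
    rw [show m + 1 + (m + 1 + k) = 2 * m + 1 + k + 1 by ring,
      show 2 * (m + 1) + (m + 1 + k) = 2 * m + 1 + k + 1 + (m + 1) by ring, hIcc,
      sum_Ico_eq_sum_range, diagCoeff₃, sum_mul]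
    refine sum_congr (by simp) fun j _ => ?_
    rw [show 2 * m + 1 + k + 1 + (m + 1) - (2 * m + 1 + k + 1 + j) = m + 1 - j by omega]
    ring
  have h₄ : t ^ (4 * (m + 1) + 2 * (m + 1 + k)) = diagCoeff₄ t m * (t ^ 2) ^ k := by
    rw [diagCoeff₄]
    ring
  rw [gl3PoincarePoly, h₂, h₃, h₄, diagCoeff₁]

theorem summand₁_eq :
    gl3C (t ^ 2 + 1) * gl3T₁ * gl3T₂ *
        MvPowerSeries.invOfUnit
          ((1 - gl3T₂) * (1 - gl3T₁ * gl3T₂) * (1 - gl3C (t ^ 4) * gl3T₁ * gl3T₂) ^ 2) 1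
      = diagProd (X * PowerSeries.mk (diagCoeff₁ t)) (PowerSeries.mk 1) :=
  mul_invOfUnit_eq_diagProd (Da := (1 - X) * (1 - C (t ^ 4) * X) ^ 2) (Db := 1 - X)
    (by rw [mul_left_comm, mul_mk_diagCoeff₁]) (by rw [mul_comm, mk_one_mul_one_sub_eq_one])
    (by simp) (by simp)
    (by simp [diagProd, substAlgHom_X, gl3C, gl3T₁, gl3T₂]; ring)
    (by simp [diagProd, substAlgHom_X, gl3C, gl3T₁, gl3T₂]; ring)

theorem summand₂_eq :
    gl3C (t ^ 4) * gl3T₁ * gl3T₂ ^ 2 * (3 - gl3C (t ^ 4) * gl3T₁ * gl3T₂) *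
        MvPowerSeries.invOfUnit
          ((1 - gl3T₂) * (1 - gl3C (t ^ 2) * gl3T₂) *
            (1 - gl3C (t ^ 4) * gl3T₁ * gl3T₂) ^ 2) 1
      = diagProd (X * PowerSeries.mk (diagCoeff₂ t))
          (PowerSeries.mk fun k => ∑ i ∈ range k, (t ^ 2) ^ i) :=
  mul_invOfUnit_eq_diagProd (Da := (1 - C (t ^ 4) * X) ^ 2) (Db := (1 - X) * (1 - C (t ^ 2) * X))
    (by rw [mul_left_comm, mul_mk_diagCoeff₂]) (one_sub_X_mul_one_sub_C_mul_X_mul_mk_geom_sum _)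
    (by simp) (by simp)
    (by simp [diagProd, substAlgHom_X, map_ofNat, gl3C, gl3T₁, gl3T₂]; ring)
    (by simp [diagProd, substAlgHom_X, gl3C, gl3T₁, gl3T₂]; ring)

theorem summand₃_eq :
    4 * (gl3C (t ^ 4) * gl3T₁ * gl3T₂) *
        MvPowerSeries.invOfUnit
          ((1 - gl3C (t ^ 2) * gl3T₂) * (1 - gl3C (t ^ 4) * gl3T₁ * gl3T₂) ^ 2 *
            (1 - gl3C (t ^ 6) * gl3T₁ * gl3T₂)) 1
      = diagProd (X * PowerSeries.mk (diagCoeff₃ t)) (PowerSeries.mk ((t ^ 2) ^ ·)) :=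
  mul_invOfUnit_eq_diagProd (Da := (1 - C (t ^ 4) * X) ^ 2 * (1 - C (t ^ 6) * X))
    (Db := 1 - C (t ^ 2) * X)
    (by rw [mul_left_comm, mul_mk_diagCoeff₃]) (one_sub_C_mul_X_mul_mk_pow _)
    (by simp) (by simp)
    (by simp [diagProd, substAlgHom_X, map_ofNat, gl3C, gl3T₁, gl3T₂]; ring)
    (by simp [diagProd, substAlgHom_X, gl3C, gl3T₁, gl3T₂]; ring)

theorem summand₄_eq :
    gl3C (t ^ 6) * gl3T₁ * gl3T₂ *
        MvPowerSeries.invOfUnit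
          ((1 - gl3C (t ^ 2) * gl3T₂) * (1 - gl3C (t ^ 6) * gl3T₁ * gl3T₂)) 1
      = diagProd (X * PowerSeries.mk (diagCoeff₄ t)) (PowerSeries.mk ((t ^ 2) ^ ·)) :=
  mul_invOfUnit_eq_diagProd (Da := 1 - C (t ^ 6) * X) (Db := 1 - C (t ^ 2) * X)
    (by rw [mul_left_comm, mul_mk_diagCoeff₄]) (one_sub_C_mul_X_mul_mk_pow _)
    (by simp) (by simp)
    (by simp [diagProd, substAlgHom_X, gl3C, gl3T₁, gl3T₂]; ring)
    (by simp [diagProd, substAlgHom_X, gl3C, gl3T₁, gl3T₂]; ring)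

end GL3

open GL3 PowerSeries in
/-- **Rationality of the generating series for `GL₃`, region `n₁ ≤ n₂`.**
In `ℤ[t][[T₁,T₂]]` one has
`∑_{n₂ ≥ 1} ∑_{1 ≤ n₁ ≤ n₂} P_{(n₁,n₂)}(t) T₁^{n₁} T₂^{n₂}
  = (t²+1)T₁T₂/[(1−T₂)(1−T₁T₂)(1−t⁴T₁T₂)²]
  + t⁴T₁T₂²(3−t⁴T₁T₂)/[(1−T₂)(1−t²T₂)(1−t⁴T₁T₂)²]
  + 4t⁴T₁T₂/[(1−t²T₂)(1−t⁴T₁T₂)²(1−t⁶T₁T₂)]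
  + t⁶T₁T₂/[(1−t²T₂)(1−t⁶T₁T₂)]`,
stated coefficientwise (the inverses being `MvPowerSeries.invOfUnit _ 1`, genuine inverses
since each denominator has constant coefficient `1`). -/
theorem gl3_generating_series_ordered :
    ∀ n₁ n₂ : ℕ,
      MvPowerSeries.coeff (R := Polynomial ℤ) (Finsupp.single (0 : Fin 2) n₁ + Finsupp.single 1 n₂)
        (gl3C (Polynomial.X ^ 2 + 1) * gl3T₁ * gl3T₂ *
            MvPowerSeries.invOfUnit
              ((1 - gl3T₂) * (1 - gl3T₁ * gl3T₂) *
                (1 - gl3C (Polynomial.X ^ 4) * gl3T₁ * gl3T₂) ^ 2) 1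
          + gl3C (Polynomial.X ^ 4) * gl3T₁ * gl3T₂ ^ 2 *
              (3 - gl3C (Polynomial.X ^ 4) * gl3T₁ * gl3T₂) *
            MvPowerSeries.invOfUnit
              ((1 - gl3T₂) * (1 - gl3C (Polynomial.X ^ 2) * gl3T₂) *
                (1 - gl3C (Polynomial.X ^ 4) * gl3T₁ * gl3T₂) ^ 2) 1
          + 4 * (gl3C (Polynomial.X ^ 4) * gl3T₁ * gl3T₂) *
            MvPowerSeries.invOfUnit
              ((1 - gl3C (Polynomial.X ^ 2) * gl3T₂) *
                (1 - gl3C (Polynomial.X ^ 4) * gl3T₁ * gl3T₂) ^ 2 *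
                (1 - gl3C (Polynomial.X ^ 6) * gl3T₁ * gl3T₂)) 1
          + gl3C (Polynomial.X ^ 6) * gl3T₁ * gl3T₂ *
            MvPowerSeries.invOfUnit
              ((1 - gl3C (Polynomial.X ^ 2) * gl3T₂) *
                (1 - gl3C (Polynomial.X ^ 6) * gl3T₁ * gl3T₂)) 1)
      = if 1 ≤ n₁ ∧ n₁ ≤ n₂ then gl3PoincarePoly n₁ n₂ else 0 := by
  intro n₁ n₂
  rw [summand₁_eq, summand₂_eq, summand₃_eq, summand₄_eq]
  simp only [map_add, coeff_diagProd]
  rcases n₁ with _ | m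
  · simp
  · by_cases h : m + 1 ≤ n₂
    · obtain ⟨k, rfl⟩ := Nat.exists_eq_add_of_le h
      simp [coeff_succ_X_mul, gl3PoincarePoly_succ_add]
    · simp [h]
end

section
/- For integers 1 ≤ n_1 ≤ n_2 define P_{(n_1,n_2)}(t) = ∑_{i=1}^{n_1} i(t^{4i−2}+t^{4i−4}) + ∑_{i=2n_1}^{n_1+n_2−1} (2n_1+1)t^{2i} + ∑_{i=n_1+n_2}^{2n_1+n_2−1} 4(2n_1+n_2−i)t^{2i} + t^{4n_1+2n_2} ∈ ℤ[t]. Then in the formal power series ring ℤ[t][[S]] one has: ∑_{n=1}^{∞} P_{(n,n)}(t)·S^{n} = (t²+1)S · [(1−S)(1−t⁴S)²]^{−1} + 4t⁴S · [(1−t⁴S)²(1−t⁶S)]^{−1} + t⁶S · (1−t⁶S)^{−1}. -/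
open Finset

/-- The constant `t`-polynomial viewed in `ℤ[t][[S]]`. -/
noncomputable def gl3Cs (p : Polynomial ℤ) : PowerSeries (Polynomial ℤ) :=
  PowerSeries.C p

/-- The variable `S` of `ℤ[t][[S]]`. -/
noncomputable def gl3S : PowerSeries (Polynomial ℤ) := PowerSeries.X

/-!
Each of the three summands is a rational series whose denominator is a product of factors
`1 - bS`, and multiplying a coefficient sequence by `1/(1 - bS)` convolves it with `(bⁿ)`.
On the diagonal the middle sum of `P_{(n,n)}` is empty, the first sum is the partial sum of
`k (t² + 1) t^{4(k-1)}`, the coefficient sequence of `(t² + 1) S / (1 - t⁴S)²`, and the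
reindexing `k = 3n - i` turns the third sum into `∑_{k ≤ n} t^{6(n-k)} · 4k t^{4k}`, the
convolution of the coefficients of `4t⁴S / (1 - t⁴S)²` with those of `1 / (1 - t⁶S)`.
-/

theorem Finset.sum_range_succ_eq_sum_Icc_one {M : Type*} [AddCommMonoid M] {f : ℕ → M}
    (h : f 0 = 0) (n : ℕ) : ∑ k ∈ range (n + 1), f k = ∑ k ∈ Icc 1 n, f k := by
  rw [Nat.range_succ_eq_Icc_zero, ← insert_Icc_add_one_left_eq_Icc n.zero_le,
    sum_insert (by simp), h, zero_add]
  rfl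

namespace PowerSeries

variable {R : Type*} [CommRing R]

theorem mk_pow_mul_one_sub_C_mul_X (b : R) : mk (b ^ ·) * (1 - C b * X) = 1 := by
  simpa [rescale_X, rescale_mk] using congrArg (rescale b) (mk_one_mul_one_sub_eq_one R)

theorem mul_invOfUnit_eq_of_mul_eq {u g x : R⟦X⟧} (hu : constantCoeff u = 1) (h : g * u = x) :
    x * invOfUnit u 1 = g := by
  rw [← h, mul_assoc, mul_invOfUnit u 1 (by simpa using hu), mul_one]

theorem mk_sum_range_pow_mul_mul_one_sub_C_mul_X (b : R) (f : ℕ → R) :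
    mk (fun n => ∑ k ∈ range (n + 1), b ^ (n - k) * f k) * (1 - C b * X) = mk f := by
  have h : mk (fun n => ∑ k ∈ range (n + 1), b ^ (n - k) * f k) = mk f * mk (b ^ ·) := by
    ext n
    simp only [coeff_mk, coeff_mul, Nat.sum_antidiagonal_eq_sum_range_succ_mk, mul_comm]
  rw [h, mul_assoc, mk_pow_mul_one_sub_C_mul_X, mul_one]

theorem mk_ite_mul_pow_pred_mul_one_sub_C_mul_X (c b : R) :
    mk (fun n => if n = 0 then 0 else c * b ^ (n - 1)) * (1 - C b * X) = C c * X := by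
  have h : mk (fun n => if n = 0 then 0 else c * b ^ (n - 1)) = C c * X * mk (b ^ ·) := by
    ext (_ | n)
    · simp
    · rw [mul_assoc, coeff_C_mul, coeff_succ_X_mul]; simp
  rw [h, mul_assoc, mk_pow_mul_one_sub_C_mul_X, mul_one]

theorem mk_natCast_mul_pow_pred_mul_one_sub_C_mul_X_sq (c b : R) :
    mk (fun n => n * c * b ^ (n - 1)) * (1 - C b * X) ^ 2 = C c * X := by
  have h (n : ℕ) : (n : R) * c * b ^ (n - 1) =
      ∑ k ∈ range (n + 1), b ^ (n - k) * if k = 0 then 0 else c * b ^ (k - 1) := by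
    rw [sum_range_succ', if_pos rfl, mul_zero, add_zero]
    trans ∑ k ∈ range n, c * b ^ (n - 1)
    · rw [sum_const, card_range, nsmul_eq_mul, mul_assoc]
    · refine sum_congr rfl fun k hk => ?_
      rw [if_neg k.succ_ne_zero, Nat.add_sub_cancel, mul_left_comm, ← pow_add,
        show n - (k + 1) + k = n - 1 by have := mem_range.1 hk; omega]
  simp_rw [h]
  rw [sq, ← mul_assoc, mk_sum_range_pow_mul_mul_one_sub_C_mul_X,
    mk_ite_mul_pow_pred_mul_one_sub_C_mul_X]

end PowerSeries

namespace GL3Diagonal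

open PowerSeries

variable {R : Type*} [CommRing R]

def firstSum (t : R) (n : ℕ) : R :=
  ∑ i ∈ Icc 1 n, (i : R) * (t ^ (4 * i - 2) + t ^ (4 * i - 4))

def thirdSum (t : R) (n : ℕ) : R :=
  ∑ i ∈ Icc (2 * n) (3 * n - 1), ((4 * (3 * n - i) : ℕ) : R) * t ^ (2 * i)

theorem firstSum_eq_sum_range (t : R) (n : ℕ) :
    firstSum t n =
      ∑ k ∈ range (n + 1), 1 ^ (n - k) * (k * (t ^ 2 + 1) * (t ^ 4) ^ (k - 1)) := by
  rw [sum_range_succ_eq_sum_Icc_one (by simp)]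
  refine sum_congr rfl fun i hi => ?_
  obtain ⟨j, rfl⟩ : ∃ j, i = j + 1 := Nat.exists_eq_add_of_le' (mem_Icc.1 hi).1
  rw [show 4 * (j + 1) - 2 = 4 * j + 2 by omega, show 4 * (j + 1) - 4 = 4 * j by omega,
    Nat.add_sub_cancel, pow_add, ← pow_mul]
  ring

theorem thirdSum_eq_sum_range (t : R) (n : ℕ) :
    thirdSum t n =
      ∑ k ∈ range (n + 1), (t ^ 6) ^ (n - k) * (k * (4 * t ^ 4) * (t ^ 4) ^ (k - 1)) := by
  rcases n.eq_zero_or_pos with rfl | hn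
  · simp [thirdSum]
  rw [sum_range_succ_eq_sum_Icc_one (by simp)]
  refine sum_nbij' (3 * n - ·) (3 * n - ·) ?_ ?_ ?_ ?_ ?_ <;> intro i hi <;> rw [mem_Icc] at hi
  · rw [mem_Icc]; omega
  · rw [mem_Icc]; omega
  · omega
  · omega
  · rw [show 2 * i = 6 * (n - (3 * n - i)) + 4 + 4 * (3 * n - i - 1) by omega, pow_add, pow_add,
      pow_mul, pow_mul]
    push_cast
    ring

theorem mk_firstSum_mul (t : R) :
    mk (firstSum t) * ((1 - X) * (1 - C (t ^ 4) * X) ^ 2) = C (t ^ 2 + 1) * X := by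
  have h : (1 : R⟦X⟧) - X = 1 - C 1 * X := by rw [map_one, one_mul]
  rw [h, ← mul_assoc, funext (firstSum_eq_sum_range t),
    mk_sum_range_pow_mul_mul_one_sub_C_mul_X, mk_natCast_mul_pow_pred_mul_one_sub_C_mul_X_sq]

theorem mk_thirdSum_mul (t : R) :
    mk (thirdSum t) * ((1 - C (t ^ 4) * X) ^ 2 * (1 - C (t ^ 6) * X)) = 4 * (C (t ^ 4) * X) := by
  rw [mul_comm ((1 - C (t ^ 4) * X) ^ 2), ← mul_assoc, funext (thirdSum_eq_sum_range t),
    mk_sum_range_pow_mul_mul_one_sub_C_mul_X, mk_natCast_mul_pow_pred_mul_one_sub_C_mul_X_sq,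
    map_mul, map_ofNat, mul_assoc]

theorem mk_pow_six_mul (t : R) :
    mk (fun n => if n = 0 then 0 else t ^ (6 * n)) * (1 - C (t ^ 6) * X) = C (t ^ 6) * X := by
  convert mk_ite_mul_pow_pred_mul_one_sub_C_mul_X (t ^ 6) (t ^ 6) using 4 with n
  split_ifs with hn
  · rfl
  · rw [← pow_succ', Nat.sub_add_cancel (Nat.one_le_iff_ne_zero.2 hn), pow_mul]

end GL3Diagonal

open GL3Diagonal in
theorem gl3PoincarePoly_self {n : ℕ} (hn : n ≠ 0) :
    gl3PoincarePoly n n =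
      firstSum Polynomial.X n + thirdSum Polynomial.X n + Polynomial.X ^ (6 * n) := by
  rw [gl3PoincarePoly, Icc_eq_empty (show ¬2 * n ≤ n + n - 1 by omega), sum_empty, add_zero,
    firstSum, thirdSum, ← two_mul, show 2 * n + n = 3 * n by ring,
    show 4 * n + 2 * n = 6 * n by ring]

open GL3Diagonal PowerSeries in
/-- **The diagonal generating series for `GL₃`.**  In `ℤ[t][[S]]` one has
`∑_{n ≥ 1} P_{(n,n)}(t) S^n
  = (t²+1)S/[(1−S)(1−t⁴S)²] + 4t⁴S/[(1−t⁴S)²(1−t⁶S)] + t⁶S/(1−t⁶S)`,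
stated coefficientwise (the inverses being `PowerSeries.invOfUnit _ 1`, genuine inverses
since each denominator has constant coefficient `1`). -/
theorem gl3_generating_series_diagonal :
    ∀ n : ℕ,
      PowerSeries.coeff n
        (gl3Cs (Polynomial.X ^ 2 + 1) * gl3S *
            PowerSeries.invOfUnit
              ((1 - gl3S) * (1 - gl3Cs (Polynomial.X ^ 4) * gl3S) ^ 2) 1
          + 4 * (gl3Cs (Polynomial.X ^ 4) * gl3S) *
            PowerSeries.invOfUnit
              ((1 - gl3Cs (Polynomial.X ^ 4) * gl3S) ^ 2 *
                (1 - gl3Cs (Polynomial.X ^ 6) * gl3S)) 1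
          + gl3Cs (Polynomial.X ^ 6) * gl3S *
            PowerSeries.invOfUnit (1 - gl3Cs (Polynomial.X ^ 6) * gl3S) 1)
      = if 1 ≤ n then gl3PoincarePoly n n else 0 := by
  intro n
  simp only [gl3Cs, gl3S]
  rw [mul_invOfUnit_eq_of_mul_eq (by simp) (mk_firstSum_mul Polynomial.X),
    mul_invOfUnit_eq_of_mul_eq (by simp) (mk_thirdSum_mul Polynomial.X),
    mul_invOfUnit_eq_of_mul_eq (by simp) (mk_pow_six_mul Polynomial.X)]
  rcases n with _ | n
  · simp [firstSum, thirdSum]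
  · simp [gl3PoincarePoly_self]
end
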